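/- arXiv:2303.18077 — 5 statements merged into one kernel-verified Lean document; each statement's English description precedes it below -/
import Mathlib

section
/- Let v ⋖ w be a cover relation of the greedy m-Tamari order, where v and w are nonempty m-Dyck paths, and let v' (respectively w') be obtained from v (respectively w) by deleting its last peak, i.e., the last up step together with the m down steps immediately following it. Then either v' = w' (which happens exactly when the cover relation takes place in the last valley of v), or v' ⋖ w'. Consequently, if v ≤ w in the greedy order and v', w' are obtained from v, w by deleting the last peak, then v' ≤ w'. -/
/-! Words over `Bool` encode lattice paths: `true` = up step (letter 1),
`false` = down step (letter 0). -/

/-- `w` is an `m`-Dyck word: the number of 0's is `m` times the number of 1's,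
and every prefix `p` satisfies `m·|p|₁ ≥ |p|₀`.  (The empty word is allowed;
an `m`-Dyck path of size `n` is an `m`-Dyck word with `n` letters 1.) -/
def IsDyck (m : ℕ) (w : List Bool) : Prop :=
  w.count false = m * w.count true ∧
  ∀ p : List Bool, p <+: w → p.count false ≤ m * p.count true

/-- Cover relation of the greedy `m`-Tamari order: swap a valley's down step with
the *longest* Dyck factor that follows it. -/
def GreedyCover (m : ℕ) (w w' : List Bool) : Prop :=
  ∃ u d v : List Bool, d ≠ [] ∧ IsDyck m d ∧
    w = u ++ false :: (d ++ v) ∧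
    w' = u ++ d ++ false :: v ∧
    ∀ d' : List Bool, d' <+: d ++ v → IsDyck m d' → d'.length ≤ d.length

/-- The greedy `m`-Tamari order (reflexive-transitive closure of the cover relation). -/
def GreedyLe (m : ℕ) : List Bool → List Bool → Prop :=
  Relation.ReflTransGen (GreedyCover m)

/-- Cover relation of the ordinary `m`-Tamari order: swap a valley's down step with
the *shortest nonempty* Dyck factor that follows it. -/
def OrdCover (m : ℕ) (w w' : List Bool) : Prop :=
  ∃ u d v : List Bool, d ≠ [] ∧ IsDyck m d ∧
    w = u ++ false :: (d ++ v) ∧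
    w' = u ++ d ++ false :: v ∧
    ∀ d' : List Bool, d' <+: d ++ v → IsDyck m d' → d' ≠ [] → d.length ≤ d'.length

/-- The ordinary `m`-Tamari order. -/
def OrdLe (m : ℕ) : List Bool → List Bool → Prop :=
  Relation.ReflTransGen (OrdCover m)

/-- The word `1·0^m` (a single peak), unit of the monoid `(D_m, *)`. -/
def peakWord (m : ℕ) : List Bool := true :: List.replicate m false

/-- Length of the final descent: the longest suffix of the form `0^k`. -/
def finalDescent (w : List Bool) : ℕ := (w.reverse.takeWhile (fun b => !b)).length

/-- The product `w₁ * w₂` on nonempty `m`-Dyck words: replace the rightmost peak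
(the last up step together with the `m` down steps following it) of `w₁` by `w₂`. -/
def star (m : ℕ) (w₁ w₂ : List Bool) : List Bool :=
  w₁.take (w₁.length - (finalDescent w₁ + 1)) ++ w₂ ++
    List.replicate (finalDescent w₁ - m) false

/-- Delete the last peak (the last up step and the `m` down steps following it). -/
def delPeak (m : ℕ) (w : List Bool) : List Bool :=
  w.take (w.length - (finalDescent w + 1)) ++ List.replicate (finalDescent w - m) false

/-- `D(w₀, …, w_m) = 1 (w₀ 0) (w₁ 0) ⋯ (w_{m-1} 0) w_m` : the canonical
decomposition of nonempty `m`-Dyck words (components indexed by `Fin (m+1)`). -/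
def Dpath (m : ℕ) (ws : Fin (m+1) → List Bool) : List Bool :=
  true :: ((List.ofFn fun j : Fin m => ws j.castSucc ++ [false]).flatten ++ ws (Fin.last m))

/-- Generators of the free monoid `(D_m, *)` : the words
`D(w₁,…,w_{i−1}, 1·0^m, ∅,…,∅)` with Dyck (possibly empty) components before
position `i`. -/
def IsGenerator (m : ℕ) (g : List Bool) : Prop :=
  ∃ i : Fin (m+1), ∃ ws : Fin (m+1) → List Bool,
    (∀ j, IsDyck m (ws j)) ∧ ws i = peakWord m ∧
    (∀ j : Fin (m+1), i < j → ws j = []) ∧ g = Dpath m ws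

/-- A prime (no contact) nonempty `m`-Dyck word: no proper nonempty prefix `p`
satisfies `m·|p|₁ = |p|₀`. -/
def IsPrimePath (m : ℕ) (w : List Bool) : Prop :=
  IsDyck m w ∧ w ≠ [] ∧
  ∀ p : List Bool, p <+: w → p ≠ [] → p ≠ w → p.count false ≠ m * p.count true

/-! Write the cover as `v = u·0·d·r ⋖ w = u·d·0·r`. If `d·r = 1·0^s`, then `d = 1·0^m` and
deleting the last peak turns both `v` and `w` into `u·0^(s-m+1)`. Otherwise `v` and `w` share
their last peak, which lies in `r` or, when `r = 0^t`, in `d`; deleting it yields again a swap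
`u·0·d'·r' ⋖ u·d'·0·r'`. It remains to see that `d'` is still the longest Dyck prefix of `d'·r'`.
Inserting or deleting a factor `1·0^m` preserves the Dyck property, so if the peak was in `r`, a
longer Dyck prefix after the deletion gives one before it; if it was in `d`, a longer one would
be `d'·0^i` with `i > 0`, which has too many down steps. -/

open List

lemma List.prefix_append_cases {α : Type*} {p a b : List α} (h : p <+: a ++ b) :
    p <+: a ∨ ∃ q, q <+: b ∧ p = a ++ q := by
  obtain ⟨t, ht⟩ := h
  rcases append_eq_append_iff.1 ht with ⟨a', rfl, -⟩ | ⟨c', rfl, hb⟩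
  · exact Or.inl (prefix_append _ _)
  · exact Or.inr ⟨c', ⟨t, hb.symm⟩, rfl⟩

lemma List.exists_eq_append_true_replicate {r : List Bool} (h : true ∈ r) :
    ∃ x k, r = x ++ true :: replicate k false := by
  induction r using List.reverseRecOn with
  | nil => simp at h
  | append_singleton r b ih =>
    cases b
    · obtain ⟨x, k, rfl⟩ := ih (by simpa using h)
      exact ⟨x, k + 1, by simp [replicate_succ']⟩
    · exact ⟨r, 0, rfl⟩

lemma delPeak_append_true_replicate (m : ℕ) (x : List Bool) (k : ℕ) :
    delPeak m (x ++ true :: replicate k false) = x ++ replicate (k - m) false := by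
  simp [delPeak, finalDescent]

namespace IsDyck

variable {m : ℕ}

lemma exists_eq_true_cons {d : List Bool} (h : IsDyck m d) (hd : d ≠ []) :
    ∃ t, d = true :: t := by
  obtain _ | ⟨_ | _, t⟩ := d
  · exact absurd rfl hd
  · simpa using h.2 [false] ⟨t, rfl⟩
  · exact ⟨t, rfl⟩

lemma append_peakWord_append_iff (x y : List Bool) :
    IsDyck m (x ++ peakWord m ++ y) ↔ IsDyck m (x ++ y) := by
  simp only [IsDyck, peakWord, append_assoc, count_append, count_cons, count_replicate]
  constructor
  · rintro ⟨hc, hp⟩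
    refine ⟨by simp at hc; lia, fun p hp' => ?_⟩
    rcases prefix_append_cases hp' with h | ⟨q, hq, rfl⟩
    · exact hp p (h.trans (prefix_append _ _))
    · have := hp (x ++ true :: (replicate m false ++ q)) (by simpa using hq)
      simp [count_append, count_replicate] at this ⊢
      lia
  · rintro ⟨hc, hp⟩
    refine ⟨by simp; lia, fun p hp' => ?_⟩
    have hx := hp x (prefix_append _ _)
    rcases prefix_append_cases hp' with h | ⟨q, hq, rfl⟩
    · exact hp p (h.trans (prefix_append _ _))
    · rcases prefix_cons_iff.1 hq with rfl | ⟨t, rfl, ht⟩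
      · simpa using hx
      rcases prefix_append_cases ht with ht | ⟨q', hq', rfl⟩
      · obtain ⟨hlen, ht⟩ := prefix_replicate_iff.1 ht
        rw [ht]
        simp [count_append, count_replicate]
        lia
      · have := hp (x ++ q') ((prefix_append_right_inj x).2 hq')
        simp [count_append, count_replicate] at this ⊢
        lia

lemma exists_eq_append_peakWord {d : List Bool} (h : IsDyck m d) (hd : d ≠ []) :
    ∃ x j, d = x ++ peakWord m ++ replicate j false := by
  obtain ⟨t, ht⟩ := h.exists_eq_true_cons hd
  obtain ⟨x, k, rfl⟩ := exists_eq_append_true_replicate (ht ▸ mem_cons_self : true ∈ d)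
  have hx := h.2 x (prefix_append _ _)
  have hcount := h.1
  simp [count_append, count_replicate] at hcount
  refine ⟨x, k - m, ?_⟩
  rw [append_assoc, peakWord, cons_append, ← replicate_add]
  congr 3
  lia

lemma eq_peakWord_of_prefix {d : List Bool} {s : ℕ} (h : IsDyck m d) (hd : d ≠ [])
    (hs : d <+: true :: replicate s false) : d = peakWord m := by
  obtain rfl | ⟨t, rfl, ht⟩ := prefix_cons_iff.1 hs
  · exact absurd rfl hd
  obtain ⟨-, ht⟩ := prefix_replicate_iff.1 ht
  have hcount := h.1
  rw [ht] at hcount ⊢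
  simp [count_replicate] at hcount
  rw [peakWord, hcount]

lemma eq_zero_of_append_replicate {e : List Bool} {i : ℕ} (he : IsDyck m e)
    (h : IsDyck m (e ++ replicate i false)) : i = 0 := by
  have := h.1
  simp [count_append, count_replicate, he.1] at this
  lia

lemma exists_prefix_of_prefix_delPeak {x d' : List Bool} {k : ℕ} (h : IsDyck m d')
    (hp : d' <+: delPeak m (x ++ true :: replicate k false)) :
    ∃ d'', d'' <+: x ++ true :: replicate k false ∧ IsDyck m d'' ∧ d'.length ≤ d''.length := by
  rw [delPeak_append_true_replicate] at hp
  rcases prefix_append_cases hp with hx | ⟨q, hq, rfl⟩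
  · exact ⟨d', hx.trans (prefix_append _ _), h, le_rfl⟩
  obtain ⟨hlen, hq⟩ := prefix_replicate_iff.1 hq
  rcases Nat.eq_zero_or_pos q.length with h0 | h0
  · rw [length_eq_zero_iff.1 h0, append_nil] at h ⊢
    exact ⟨x, prefix_append _ _, h, le_rfl⟩
  · refine ⟨x ++ peakWord m ++ q, ?_, (append_peakWord_append_iff x q).2 h, by simp⟩
    rw [hq, append_assoc, prefix_append_right_inj, peakWord, cons_append, prefix_cons_inj,
      ← replicate_add, prefix_replicate_iff]
    exact ⟨by simp; lia, by simp⟩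

end IsDyck

section Cover

variable {m : ℕ} {u d r : List Bool}

lemma delPeak_eq_of_append_eq {s : ℕ} (hd : d ≠ []) (hdy : IsDyck m d)
    (hs : d ++ r = true :: replicate s false) :
    delPeak m (u ++ false :: (d ++ r)) = delPeak m (u ++ d ++ false :: r) := by
  obtain rfl := hdy.eq_peakWord_of_prefix hd (hs ▸ prefix_append d r)
  obtain ⟨-, -, hr⟩ := append_eq_replicate_iff.1 (cons.inj hs).2
  rw [hr]
  have hv : u ++ false :: (peakWord m ++ replicate r.length false) =
      (u ++ [false]) ++ true :: replicate (m + r.length) false := by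
    simp [peakWord]
  have hw : u ++ peakWord m ++ false :: replicate r.length false =
      u ++ true :: replicate (m + (r.length + 1)) false := by
    simp [peakWord, ← replicate_succ]
  rw [hv, hw, delPeak_append_true_replicate, delPeak_append_true_replicate]
  simp [replicate_succ]

lemma greedyCover_delPeak_of_true_mem (hd : d ≠ []) (hdy : IsDyck m d)
    (hmax : ∀ d' : List Bool, d' <+: d ++ r → IsDyck m d' → d'.length ≤ d.length)
    (hr : true ∈ r) :
    GreedyCover m (delPeak m (u ++ false :: (d ++ r))) (delPeak m (u ++ d ++ false :: r)) := by
  obtain ⟨r₀, k, rfl⟩ := exists_eq_append_true_replicate hr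
  have hv : u ++ false :: (d ++ (r₀ ++ true :: replicate k false)) =
      (u ++ false :: (d ++ r₀)) ++ true :: replicate k false := by simp
  have hw : u ++ d ++ false :: (r₀ ++ true :: replicate k false) =
      (u ++ d ++ false :: r₀) ++ true :: replicate k false := by simp
  rw [hv, hw, delPeak_append_true_replicate, delPeak_append_true_replicate]
  refine ⟨u, d, r₀ ++ replicate (k - m) false, hd, hdy, by simp, by simp, fun d' hd' hdy' => ?_⟩
  obtain ⟨d'', hpre, hdy'', hlen⟩ :=
    hdy'.exists_prefix_of_prefix_delPeak (x := d ++ r₀)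
      (by rwa [delPeak_append_true_replicate, append_assoc])
  exact hlen.trans (hmax d'' (by simpa using hpre) hdy'')

lemma greedyCover_delPeak_of_eq_replicate {t : ℕ} (hd : d ≠ []) (hdy : IsDyck m d)
    (hlast : ¬ ∃ s, d ++ r = true :: replicate s false) (hr : r = replicate t false) :
    GreedyCover m (delPeak m (u ++ false :: (d ++ r))) (delPeak m (u ++ d ++ false :: r)) := by
  subst hr
  obtain ⟨x, j, rfl⟩ := hdy.exists_eq_append_peakWord hd
  have hv : u ++ false :: (x ++ peakWord m ++ replicate j false ++ replicate t false) =
      (u ++ false :: x) ++ true :: replicate (m + (j + t)) false := by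
    simp [peakWord, Nat.add_assoc]
  have hw : u ++ (x ++ peakWord m ++ replicate j false) ++ false :: replicate t false =
      (u ++ x) ++ true :: replicate (m + (j + 1 + t)) false := by
    simp [peakWord, ← replicate_succ]
    lia
  rw [hv, hw, delPeak_append_true_replicate, delPeak_append_true_replicate,
    Nat.add_sub_cancel_left, Nat.add_sub_cancel_left]
  have he : IsDyck m (x ++ replicate j false) := (IsDyck.append_peakWord_append_iff _ _).1 hdy
  refine ⟨u, x ++ replicate j false, replicate t false, ?_, he, by simp,
    by simp [← replicate_succ]; lia, fun d' hd' hdy' => ?_⟩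
  · rintro hnil
    simp only [append_eq_nil_iff, replicate_eq_nil_iff] at hnil
    obtain ⟨rfl, rfl⟩ := hnil
    exact hlast ⟨m + t, by simp [peakWord]⟩
  · rcases prefix_append_cases hd' with h | ⟨q, hq, rfl⟩
    · exact h.length_le
    · obtain ⟨-, hq⟩ := prefix_replicate_iff.1 hq
      rw [hq] at hdy'
      simp [he.eq_zero_of_append_replicate hdy']

lemma greedyCover_delPeak (hd : d ≠ []) (hdy : IsDyck m d)
    (hmax : ∀ d' : List Bool, d' <+: d ++ r → IsDyck m d' → d'.length ≤ d.length)
    (hlast : ¬ ∃ s, d ++ r = true :: replicate s false) :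
    GreedyCover m (delPeak m (u ++ false :: (d ++ r))) (delPeak m (u ++ d ++ false :: r)) := by
  by_cases hr : true ∈ r
  · exact greedyCover_delPeak_of_true_mem hd hdy hmax hr
  · refine greedyCover_delPeak_of_eq_replicate hd hdy hlast (eq_replicate_iff.2 ⟨rfl, ?_⟩)
    rintro (_ | _) hb
    · rfl
    · exact absurd hb hr

lemma GreedyCover.ne {v w : List Bool} (h : GreedyCover m v w) : v ≠ w := by
  obtain ⟨u, d, r, hd, hdy, rfl, rfl, -⟩ := h
  obtain ⟨t, rfl⟩ := hdy.exists_eq_true_cons hd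
  simp

lemma delPeak_eq_iff_of_cover (hd : d ≠ []) (hdy : IsDyck m d)
    (hmax : ∀ d' : List Bool, d' <+: d ++ r → IsDyck m d' → d'.length ≤ d.length) :
    delPeak m (u ++ false :: (d ++ r)) = delPeak m (u ++ d ++ false :: r) ↔
      ∃ s, d ++ r = true :: replicate s false := by
  refine ⟨fun heq => ?_, fun ⟨s, hs⟩ => delPeak_eq_of_append_eq hd hdy hs⟩
  by_contra hlast
  exact (greedyCover_delPeak hd hdy hmax hlast).ne heq

lemma GreedyCover.delPeak_eq_or {v w : List Bool} (h : GreedyCover m v w) :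
    delPeak m v = delPeak m w ∨ GreedyCover m (delPeak m v) (delPeak m w) := by
  obtain ⟨u, d, r, hd, hdy, rfl, rfl, hmax⟩ := h
  by_cases hlast : ∃ s, d ++ r = true :: replicate s false
  · exact Or.inl ((delPeak_eq_iff_of_cover hd hdy hmax).2 hlast)
  · exact Or.inr (greedyCover_delPeak hd hdy hmax hlast)

lemma GreedyLe.delPeak {v w : List Bool} (h : GreedyLe m v w) :
    GreedyLe m (delPeak m v) (delPeak m w) := by
  induction h with
  | refl => exact Relation.ReflTransGen.refl
  | tail _ hbc ih =>
    rcases hbc.delPeak_eq_or with heq | hcov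
    · exact heq ▸ ih
    · exact ih.tail hcov

end Cover

theorem delPeak_greedy_general (m : ℕ) :
    (∀ u d r : List Bool, d ≠ [] → IsDyck m d →
      IsDyck m (u ++ false :: (d ++ r)) →
      (∀ d' : List Bool, d' <+: d ++ r → IsDyck m d' → d'.length ≤ d.length) →
      ((delPeak m (u ++ false :: (d ++ r)) = delPeak m (u ++ d ++ false :: r) ∨
          GreedyCover m (delPeak m (u ++ false :: (d ++ r)))
            (delPeak m (u ++ d ++ false :: r))) ∧
        (delPeak m (u ++ false :: (d ++ r)) = delPeak m (u ++ d ++ false :: r) ↔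
          ∃ s : ℕ, d ++ r = true :: List.replicate s false))) ∧
    (∀ v w : List Bool, IsDyck m v → v ≠ [] → GreedyLe m v w →
        GreedyLe m (delPeak m v) (delPeak m w)) :=
  ⟨fun u d r hd hdy _ hmax =>
    ⟨GreedyCover.delPeak_eq_or ⟨u, d, r, hd, hdy, rfl, rfl, hmax⟩,
      delPeak_eq_iff_of_cover hd hdy hmax⟩,
    fun _ _ _ _ => GreedyLe.delPeak⟩

/-- Deleting the last peak is compatible with the greedy order:
if `v ⋖ w` (with witnessing decomposition `v = u·0·d·r`, `w = u·d·0·r`), then either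
`v' = w'` or `v' ⋖ w'`, and `v' = w'` happens exactly when the cover relation takes
place in the last valley of `v` (i.e. the factor following the valley's down step is
the last peak, followed only by down steps:`d ++ r = 1·0^s`).  Consequently `v ≤ w`
implies `v' ≤ w'`. -/
theorem delPeak_greedy (m : ℕ) (hm : 1 ≤ m) :
    (∀ u d r : List Bool, d ≠ [] → IsDyck m d →
      IsDyck m (u ++ false :: (d ++ r)) →
      (∀ d' : List Bool, d' <+: d ++ r → IsDyck m d' → d'.length ≤ d.length) →
      ((delPeak m (u ++ false :: (d ++ r)) = delPeak m (u ++ d ++ false :: r) ∨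
          GreedyCover m (delPeak m (u ++ false :: (d ++ r)))
            (delPeak m (u ++ d ++ false :: r))) ∧
        (delPeak m (u ++ false :: (d ++ r)) = delPeak m (u ++ d ++ false :: r) ↔
          ∃ s : ℕ, d ++ r = true :: List.replicate s false))) ∧
    (∀ v w : List Bool, IsDyck m v → v ≠ [] → GreedyLe m v w →
        GreedyLe m (delPeak m v) (delPeak m w)) :=
  delPeak_greedy_general m
end

section
/- Let 1 ≤ j ≤ m+1 and let v = D(v₁,…,v_{j−1},v_j,∅,…,∅) be an m-Dyck path with v_j ≠ ∅. Then v can be written in a unique way as v = v' * v'', where v' is of the form D(v'₁,…,v'_{j−1}, v'_j·1·0^m, ∅,…,∅) for some (possibly empty) m-Dyck paths v'₁,…,v'_j, and v'' is a prime m-Dyck path. -/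
/-! Write `v = P · v_j · 0^(m-j)` with `P = 1 (v₁ 0) ⋯ (v_{j-1} 0)`. Since `v'` ends with the
peak of its `j`-th component, `v' * v'' = P' · u · v'' · 0^(m-j)` where `v'_j = u · 1 0^m`, so a
factorisation of `v` is the same as a splitting `v_j = u · v''` with `u` Dyck and `v''` prime:
cut `v_j` at its last contact. The prefix `P` is forced, because a Dyck word followed by a `0` is
never a prefix of a Dyck word, and the last-contact splitting is unique since a prime path has no
balanced proper prefix. -/

theorem List.prefix_append_or {α : Type*} {r x y : List α} (h : r <+: x ++ y) :
    r <+: x ∨ ∃ s, s <+: y ∧ r = x ++ s := by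
  obtain ⟨t, ht⟩ := h
  rcases List.append_eq_append_iff.mp ht with ⟨a, rfl, -⟩ | ⟨b, rfl, rfl⟩
  · exact Or.inl (List.prefix_append r a)
  · exact Or.inr ⟨b, List.prefix_append b t, rfl⟩

theorem isDyck_nil (m : ℕ) : IsDyck m [] :=
  ⟨rfl, fun p hp => by simp [List.prefix_nil.mp hp]⟩

theorem isDyck_peakWord (m : ℕ) : IsDyck m (peakWord m) := by
  refine ⟨by simp [peakWord, List.count_replicate], ?_⟩
  rintro (_ | ⟨b, q⟩) hp
  · simp
  · obtain ⟨rfl, hq⟩ := List.cons_prefix_cons.mp hp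
    have := hq.count_le false
    simp only [List.count_cons, List.count_replicate] at this ⊢
    simp at this ⊢
    nlinarith

namespace IsDyck

variable {m : ℕ} {u v : List Bool}

theorem append (hu : IsDyck m u) (hv : IsDyck m v) : IsDyck m (u ++ v) := by
  refine ⟨by simp [List.count_append, hu.1, hv.1, Nat.mul_add], fun p hp => ?_⟩
  rcases List.prefix_append_or hp with h | ⟨s, hs, rfl⟩
  · exact hu.2 p h
  · have := hv.2 s hs
    simp only [List.count_append, hu.1, Nat.mul_add]
    omega

theorem append_of_balanced (h : IsDyck m (u ++ v)) (hu : u.count false = m * u.count true) :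
    IsDyck m u ∧ IsDyck m v := by
  refine ⟨⟨hu, fun p hp => h.2 p (hp.trans (List.prefix_append u v))⟩, ?_, fun s hs => ?_⟩
  · have := h.1
    simp only [List.count_append, Nat.mul_add] at this
    omega
  · have := h.2 (u ++ s) ((List.prefix_append_right_inj u).mpr hs)
    simp only [List.count_append, Nat.mul_add] at this
    omega

theorem not_append_false_prefix (hu : IsDyck m u) (hv : IsDyck m v) : ¬ u ++ [false] <+: v := by
  intro h
  have := hv.2 _ h
  simp [List.count_append, hu.1] at this

theorem append_false_cancel {u₁ u₂ x₁ x₂ : List Bool} (hu₁ : IsDyck m u₁) (hu₂ : IsDyck m u₂)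
    (h : u₁ ++ false :: x₁ = u₂ ++ false :: x₂) : u₁ = u₂ ∧ x₁ = x₂ := by
  have key : ∀ {u a x y : List Bool}, IsDyck m u → IsDyck m (u ++ a) →
      false :: x = a ++ false :: y → a = [] := by
    rintro u (_ | ⟨b, a⟩) x y hu hua hx
    · rfl
    · obtain ⟨rfl, -⟩ := List.cons_eq_cons.mp hx
      exact absurd (by simp) (hu.not_append_false_prefix hua)
  rcases List.append_eq_append_iff.mp h with ⟨a, rfl, hx⟩ | ⟨a, rfl, hx⟩
  · obtain rfl := key hu₁ hu₂ hx
    simpa using hx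
  · obtain rfl := key hu₂ hu₁ hx
    simpa using hx.symm

theorem flatten_append_false_cancel {Ds₁ Ds₂ : List (List Bool)} {x₁ x₂ : List Bool}
    (hD₁ : ∀ D ∈ Ds₁, IsDyck m D) (hD₂ : ∀ D ∈ Ds₂, IsDyck m D)
    (hlen : Ds₁.length = Ds₂.length)
    (h : (Ds₁.map (· ++ [false])).flatten ++ x₁ = (Ds₂.map (· ++ [false])).flatten ++ x₂) :
    Ds₁ = Ds₂ ∧ x₁ = x₂ := by
  induction Ds₁ generalizing Ds₂ with
  | nil => simpa [List.eq_nil_of_length_eq_zero hlen.symm] using h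
  | cons D₁ Ds₁ ih =>
    obtain _ | ⟨D₂, Ds₂⟩ := Ds₂
    · simp at hlen
    simp only [List.map_cons, List.flatten_cons, List.append_assoc, List.singleton_append] at h
    obtain ⟨rfl, h'⟩ := append_false_cancel (hD₁ D₁ (by simp)) (hD₂ D₂ (by simp)) h
    obtain ⟨rfl, rfl⟩ := ih (fun D hD => hD₁ D (by simp [hD])) (fun D hD => hD₂ D (by simp [hD]))
      (by simpa using hlen) h'
    exact ⟨rfl, rfl⟩

theorem exists_append_isPrimePath {w : List Bool} (hw : IsDyck m w) (hne : w ≠ []) :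
    ∃ u p, IsDyck m u ∧ IsPrimePath m p ∧ w = u ++ p := by
  induction h : w.length using Nat.strong_induction_on generalizing w with
  | _ n ih =>
    by_cases hw_prime : IsPrimePath m w
    · exact ⟨[], w, isDyck_nil m, hw_prime, rfl⟩
    obtain ⟨q, ⟨r, rfl⟩, hq, hqw, hbal⟩ :
        ∃ q, q <+: w ∧ q ≠ [] ∧ q ≠ w ∧ q.count false = m * q.count true := by
      simpa [IsPrimePath, hw, hne] using hw_prime
    obtain ⟨hqD, hrD⟩ := hw.append_of_balanced hbal
    have hr : r ≠ [] := by rintro rfl; simp at hqw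
    obtain ⟨u, p, hu, hprime, rfl⟩ :=
      ih r.length (by simp [← h, List.length_pos_iff.mpr hq]) hrD hr rfl
    exact ⟨q ++ u, p, hqD.append hu, hprime, by simp⟩

theorem eq_nil_of_append_isPrimePath {t p : List Bool} (hu : IsDyck m u) (hut : IsDyck m (u ++ t))
    (htp : IsPrimePath m (t ++ p)) (hp : IsPrimePath m p) : t = [] := by
  by_contra ht
  refine htp.2.2 t (List.prefix_append t p) ht (fun h => hp.2.1 (by simpa using h.symm)) ?_
  have := hut.1
  simp only [List.count_append, hu.1, Nat.mul_add] at this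
  omega

theorem append_isPrimePath_unique {u₁ u₂ p₁ p₂ : List Bool} (hu₁ : IsDyck m u₁) (hu₂ : IsDyck m u₂)
    (hp₁ : IsPrimePath m p₁) (hp₂ : IsPrimePath m p₂) (h : u₁ ++ p₁ = u₂ ++ p₂) :
    u₁ = u₂ ∧ p₁ = p₂ := by
  rcases List.append_eq_append_iff.mp h with ⟨t, rfl, rfl⟩ | ⟨t, rfl, rfl⟩
  · simp [eq_nil_of_append_isPrimePath hu₁ hu₂ hp₁ hp₂]
  · simp [eq_nil_of_append_isPrimePath hu₂ hu₁ hp₂ hp₁]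

end IsDyck

theorem star_append_peakWord (m k : ℕ) (x w : List Bool) :
    star m (x ++ peakWord m ++ List.replicate k false) w = x ++ w ++ List.replicate k false := by
  have hx : x ++ peakWord m ++ List.replicate k false =
      x ++ true :: List.replicate (m + k) false := by
    rw [List.replicate_add]
    simp [peakWord]
  simp [hx, _root_.star, finalDescent]

theorem Dpath_append_false (m : ℕ) (ws : Fin (m + 1) → List Bool) :
    Dpath m ws ++ [false] = true :: ((List.ofFn ws).map (· ++ [false])).flatten := by
  rw [List.ofFn_succ']
  simp [Dpath, List.map_ofFn, Function.comp_def]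

def dpathPrefix (m : ℕ) (ws : Fin (m + 1) → List Bool) (j : ℕ) : List Bool :=
  true :: (((List.ofFn ws).take j).map (· ++ [false])).flatten

theorem Dpath_eq_dpathPrefix_append {m : ℕ} {ws : Fin (m + 1) → List Bool} (j : Fin (m + 1))
    (hempty : ∀ k : Fin (m + 1), j < k → ws k = []) :
    Dpath m ws = dpathPrefix m ws j ++ ws j ++ List.replicate (m - j) false := by
  have htail : (List.ofFn ws).drop (j + 1) = List.replicate (m - j) [] := by
    refine List.eq_replicate_iff.mpr ⟨by simp, fun b hb => ?_⟩
    obtain ⟨i, hi, rfl⟩ := List.getElem_of_mem hb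
    simp only [List.getElem_drop, List.getElem_ofFn]
    exact hempty _ (by simp [Fin.lt_def]; omega)
  have hsplit : List.ofFn ws = (List.ofFn ws).take j ++ ws j :: List.replicate (m - j) [] := by
    rw [← htail, ← List.getElem_ofFn (f := ws) (by simp [Fin.is_le]), ← List.drop_eq_getElem_cons,
      List.take_append_drop]
  apply List.append_cancel_right (bs := [false])
  rw [Dpath_append_false, hsplit]
  simp [dpathPrefix]
  rw [← List.replicate_succ, List.replicate_succ']

theorem dpathPrefix_update {m : ℕ} (ws : Fin (m + 1) → List Bool) (j : Fin (m + 1))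
    (x : List Bool) : dpathPrefix m (Function.update ws j x) j = dpathPrefix m ws j := by
  have : (List.ofFn (Function.update ws j x)).take j = (List.ofFn ws).take j := by
    refine List.ext_getElem (by simp) fun i hi _ => ?_
    simp only [List.getElem_take, List.getElem_ofFn]
    exact Function.update_of_ne (Fin.ne_of_lt (by simp at hi; simp [Fin.lt_def]; omega)) _ _
  rw [dpathPrefix, this, dpathPrefix]

theorem dpathPrefix_append_cancel {m : ℕ} {ws₁ ws₂ : Fin (m + 1) → List Bool} {j : ℕ}
    {x₁ x₂ : List Bool} (hws₁ : ∀ k, IsDyck m (ws₁ k)) (hws₂ : ∀ k, IsDyck m (ws₂ k))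
    (h : dpathPrefix m ws₁ j ++ x₁ = dpathPrefix m ws₂ j ++ x₂) :
    dpathPrefix m ws₁ j = dpathPrefix m ws₂ j ∧ x₁ = x₂ := by
  have hdyck : ∀ {ws : Fin (m + 1) → List Bool}, (∀ k, IsDyck m (ws k)) →
      ∀ D ∈ (List.ofFn ws).take j, IsDyck m D := fun hws D hD => by
    obtain ⟨k, rfl⟩ := List.mem_ofFn.mp (List.mem_of_mem_take hD)
    exact hws k
  obtain ⟨hD, rfl⟩ := IsDyck.flatten_append_false_cancel (hdyck hws₁) (hdyck hws₂) (by simp)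
    (List.cons_injective h)
  exact ⟨by rw [dpathPrefix, hD, dpathPrefix], rfl⟩

theorem star_Dpath_of_eq_append_peakWord {m : ℕ} {ws : Fin (m + 1) → List Bool} {j : Fin (m + 1)}
    {u : List Bool} (hempty : ∀ k : Fin (m + 1), j < k → ws k = [])
    (hj : ws j = u ++ peakWord m) (w : List Bool) :
    star m (Dpath m ws) w = dpathPrefix m ws j ++ u ++ w ++ List.replicate (m - j) false := by
  rw [Dpath_eq_dpathPrefix_append j hempty, hj, ← List.append_assoc, star_append_peakWord]

theorem unique_prime_factorisation_general (m : ℕ)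
    (j : Fin (m + 1)) (ws : Fin (m + 1) → List Bool)
    (hdyck : ∀ k, IsDyck m (ws k)) (hne : ws j ≠ [])
    (hempty : ∀ k : Fin (m + 1), j < k → ws k = []) :
    ∃! p : List Bool × List Bool,
      (∃ ws' : Fin (m + 1) → List Bool, (∀ k, IsDyck m (ws' k)) ∧
          (∀ k : Fin (m + 1), j < k → ws' k = []) ∧
          (∃ u : List Bool, IsDyck m u ∧ ws' j = u ++ peakWord m) ∧
          p.1 = Dpath m ws') ∧
      IsPrimePath m p.2 ∧
      Dpath m ws = star m p.1 p.2 := by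
  obtain ⟨u, p, hu, hp, hsplit⟩ := (hdyck j).exists_append_isPrimePath hne
  have hv : Dpath m ws = dpathPrefix m ws j ++ u ++ p ++ List.replicate (m - j) false := by
    rw [Dpath_eq_dpathPrefix_append j hempty, hsplit, List.append_assoc _ u]
  set ws' := Function.update ws j (u ++ peakWord m) with hws'
  have hws'j : ws' j = u ++ peakWord m := Function.update_self ..
  have hempty' : ∀ k, j < k → ws' k = [] := fun k hk => by
    rw [hws', Function.update_of_ne hk.ne', hempty k hk]
  refine ⟨(Dpath m ws', p), ⟨⟨ws', fun k => ?_, hempty', ⟨u, hu, hws'j⟩, rfl⟩, hp, ?_⟩, ?_⟩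
  · rcases eq_or_ne k j with rfl | hk
    · exact hws'j ▸ hu.append (isDyck_peakWord m)
    · rw [hws', Function.update_of_ne hk]
      exact hdyck k
  · rw [star_Dpath_of_eq_append_peakWord hempty' hws'j, dpathPrefix_update, hv]
  rintro ⟨v', v''⟩ ⟨⟨ws₁, hws₁, hempty₁, ⟨u₁, hu₁, hj₁⟩, rfl : v' = _⟩, hv'', heq⟩
  rw [hv, star_Dpath_of_eq_append_peakWord hempty₁ hj₁] at heq
  obtain ⟨hP, hX⟩ := dpathPrefix_append_cancel hdyck hws₁
    (by simpa only [List.append_assoc] using List.append_cancel_right heq)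
  obtain ⟨rfl, rfl⟩ := IsDyck.append_isPrimePath_unique hu hu₁ hp hv'' hX
  rw [Prod.mk.injEq, Dpath_eq_dpathPrefix_append j hempty₁, Dpath_eq_dpathPrefix_append j hempty',
    hj₁, hws'j, dpathPrefix_update, hP]
  exact ⟨rfl, rfl⟩

/-- If `v = D(v₁,…,v_{j−1}, v_j, ∅,…,∅)` with `v_j ≠ ∅`, then `v`
can be written in a unique way as `v = v' * v''` with `v'` of the form
`D(v'₁,…,v'_{j−1}, v'_j·1·0^m, ∅,…,∅)` (the `v'_k` possibly empty `m`-Dyck words) and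
`v''` a prime `m`-Dyck word.  (Components are indexed by `Fin (m+1)`, the nonempty
component of `v` being at position `j`.) -/
theorem unique_prime_factorisation (m : ℕ) (hm : 1 ≤ m)
    (j : Fin (m + 1)) (ws : Fin (m + 1) → List Bool)
    (hdyck : ∀ k, IsDyck m (ws k)) (hne : ws j ≠ [])
    (hempty : ∀ k : Fin (m + 1), j < k → ws k = []) :
    ∃! p : List Bool × List Bool,
      (∃ ws' : Fin (m + 1) → List Bool, (∀ k, IsDyck m (ws' k)) ∧
          (∀ k : Fin (m + 1), j < k → ws' k = []) ∧
          (∃ u : List Bool, IsDyck m u ∧ ws' j = u ++ peakWord m) ∧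
          p.1 = Dpath m ws') ∧
      IsPrimePath m p.2 ∧
      Dpath m ws = star m p.1 p.2 :=
  unique_prime_factorisation_general m j ws hdyck hne hempty
end

section
/- Let v = v₁ * v₂ be a nonempty m-Dyck path, with v₁ and v₂ nonempty m-Dyck paths, and assume v₂ is prime. (i) If v ⋖ w is a cover relation of the ordinary m-Tamari order, then either w = w₁ * v₂ for some w₁ with v₁ ⋖ w₁, or w = v₁ * w₂ for some w₂ with v₂ ⋖ w₂. (ii) Conversely, every cover relation v₁ ⋖ w₁ gives a cover relation v₁ * v₂ ⋖ w₁ * v₂, and every cover relation v₂ ⋖ w₂ gives a cover relation v₁ * v₂ ⋖ v₁ * w₂. (iii) Consequently, the upper ideal {w : v ≤ w} in the ordinary order equals {w₁ * w₂ : v₁ ≤ w₁ and v₂ ≤ w₂}. -/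
namespace StarProof

/-- Height of a word. -/
def Ht (m : ℕ) (w : List Bool) : ℤ := m * w.count true - w.count false

@[simp] lemma ht_nil (m : ℕ) : Ht m [] = 0 := by simp [Ht]

lemma ht_append (m : ℕ) (a b : List Bool) : Ht m (a ++ b) = Ht m a + Ht m b := by
  simp only [Ht, List.count_append]; push_cast; ring

@[simp] lemma ht_replicate_false (m n : ℕ) : Ht m (List.replicate n false) = -n := by
  simp [Ht, List.count_replicate]

@[simp] lemma ht_cons_true (m : ℕ) (w : List Bool) : Ht m (true :: w) = m + Ht m w := by
  simp [Ht]; push_cast; ring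

@[simp] lemma ht_cons_false (m : ℕ) (w : List Bool) : Ht m (false :: w) = Ht m w - 1 := by
  simp [Ht]; push_cast; ring

lemma ht_eq_zero_iff {m : ℕ} {w : List Bool} :
    Ht m w = 0 ↔ w.count false = m * w.count true := by
  rw [Ht, sub_eq_zero]
  constructor
  · intro h; exact_mod_cast h.symm
  · intro h; exact_mod_cast h.symm

lemma ht_nonneg_iff {m : ℕ} {w : List Bool} :
    0 ≤ Ht m w ↔ w.count false ≤ m * w.count true := by
  rw [Ht, sub_nonneg]
  exact ⟨fun h => by exact_mod_cast h, fun h => by exact_mod_cast h⟩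

/-- height-style characterization of Dyck. -/
lemma isDyck_iff {m : ℕ} {w : List Bool} :
    IsDyck m w ↔ Ht m w = 0 ∧ ∀ p, p <+: w → 0 ≤ Ht m p := by
  unfold IsDyck
  simp only [ht_eq_zero_iff, ht_nonneg_iff]

lemma isPrime_iff {m : ℕ} {w : List Bool} :
    IsPrimePath m w ↔ Ht m w = 0 ∧ w ≠ [] ∧
      ∀ p, p <+: w → p ≠ [] → p ≠ w → 0 < Ht m p := by
  unfold IsPrimePath
  rw [isDyck_iff]
  constructor
  · rintro ⟨⟨h0, hpre⟩, hne, hp⟩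
    refine ⟨h0, hne, fun p hpw hpne hpnw => ?_⟩
    have h1 := hpre p hpw
    have h2 : ¬ Ht m p = 0 := fun hh => hp p hpw hpne hpnw (ht_eq_zero_iff.mp hh)
    omega
  · rintro ⟨h0, hne, hp⟩
    refine ⟨⟨h0, fun p hpw => ?_⟩, hne, fun p hpw hpne hpnw => ?_⟩
    · by_cases hpne : p = []
      · subst hpne; simp
      · by_cases hpnw : p = w
        · subst hpnw; omega
        · exact (hp p hpw hpne hpnw).le
    · have := hp p hpw hpne hpnw
      intro heq
      have := ht_eq_zero_iff.mpr heq
      omega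

lemma prefix_append_cases {α : Type*} {p a b : List α} (h : p <+: a ++ b) :
    p <+: a ∨ ∃ q, q <+: b ∧ p = a ++ q := by
  rcases h with ⟨t, ht⟩
  rcases List.append_eq_append_iff.mp ht with ⟨a', ha, _⟩ | ⟨c', hp, hb⟩
  · exact Or.inl ⟨a', ha.symm⟩
  · exact Or.inr ⟨c', ⟨t, hb.symm⟩, hp⟩

lemma prefix_replicate {α : Type*} {p : List α} {n : ℕ} {x : α}
    (h : p <+: List.replicate n x) : ∃ j, j ≤ n ∧ p = List.replicate j x := by
  refine ⟨p.length, h.length_le.trans_eq (by simp), ?_⟩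
  exact List.eq_replicate_iff.2 ⟨rfl, fun b hb => by
    have := h.sublist.subset hb; simpa using List.eq_of_mem_replicate this⟩

lemma append_eq_replicate {α : Type*} {x y : List α} {n : ℕ} {a : α}
    (h : x ++ y = List.replicate n a) :
    x = List.replicate x.length a ∧ y = List.replicate y.length a ∧ x.length + y.length = n := by
  have hx : x <+: List.replicate n a := ⟨y, h⟩
  have hy : ∀ b ∈ y, b = a := fun b hb => by
    have : b ∈ List.replicate n a := h ▸ (List.mem_append.2 (Or.inr hb))
    exact List.eq_of_mem_replicate this
  obtain ⟨j, hj, rfl⟩ := prefix_replicate hx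
  refine ⟨by simp, List.eq_replicate_iff.2 ⟨rfl, hy⟩, ?_⟩
  have := congrArg List.length h
  simpa using this

lemma prime_dyck {m : ℕ} {w : List Bool} (h : IsPrimePath m w) : IsDyck m w := h.1

lemma prime_head {m : ℕ} (hm : 1 ≤ m) {w : List Bool} (h : IsPrimePath m w) :
    ∃ w', w = true :: w' := by
  rw [isPrime_iff] at h
  obtain ⟨h0, hne, hp⟩ := h
  cases w with
  | nil => exact absurd rfl hne
  | cons b w' =>
    cases b
    · exfalso
      have hpre : [false] <+: false :: w' := ⟨w', rfl⟩
      by_cases hw : ([false] : List Bool) = false :: w'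
      · have : w' = [] := by injection hw.symm
        subst this
        have : Ht m [false] = -1 := by simp [Ht]
        omega
      · have := hp [false] hpre (by simp) hw
        simp [Ht] at this
    · exact ⟨w', rfl⟩

/-- Characterization of OrdCover: the moved factor is prime. -/
lemma ordCover_iff {m : ℕ} (hm : 1 ≤ m) {w w' : List Bool} :
    OrdCover m w w' ↔ ∃ u d t : List Bool, IsPrimePath m d ∧
      w = u ++ false :: (d ++ t) ∧ w' = u ++ d ++ false :: t := by
  constructor
  · rintro ⟨u, d, t, hdne, hdD, hw, hw', hmin⟩
    refine ⟨u, d, t, ⟨hdD, hdne, fun p hpd hpne hpnd => ?_⟩, hw, hw'⟩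
    intro hcount
    have hpD : IsDyck m p := ⟨hcount, fun q hq => hdD.2 q (hq.trans hpd)⟩
    have := hmin p (hpd.trans ⟨t, rfl⟩) hpD hpne
    exact hpnd (hpd.eq_of_length (le_antisymm hpd.length_le this))
  · rintro ⟨u, d, t, hdP, hw, hw'⟩
    refine ⟨u, d, t, hdP.2.1, hdP.1, hw, hw', fun d' hd' hd'D hd'ne => ?_⟩
    by_contra hlt
    push_neg at hlt
    have hpre : d' <+: d :=
      List.prefix_of_prefix_length_le hd' ⟨t, rfl⟩ hlt.le
    have hne : d' ≠ d := fun h => by subst h; omega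
    exact hdP.2.2 d' hpre hd'ne hne hd'D.1

lemma takeWhile_rep (g : ℕ) (x : List Bool) :
    ((List.replicate g false ++ true :: x).takeWhile (fun b => !b)) = List.replicate g false := by
  induction g with
  | zero => simp
  | succ n ih => simp [List.replicate_succ, List.takeWhile_cons, ih]

lemma finalDescent_eq (C : List Bool) (g : ℕ) :
    finalDescent (C ++ true :: List.replicate g false) = g := by
  unfold finalDescent
  rw [List.reverse_append]
  have : (true :: List.replicate g false).reverse = List.replicate g false ++ true :: C.reverse ++ [] →
    True := fun _ => trivial
  have h2 : (true :: List.replicate g false).reverse ++ C.reverse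
      = List.replicate g false ++ true :: C.reverse := by
    simp [List.reverse_cons, List.reverse_replicate]
  rw [h2, takeWhile_rep]
  simp

lemma star_eq (m : ℕ) (C : List Bool) (g : ℕ) (w : List Bool) :
    _root_.star m (C ++ true :: List.replicate g false) w
      = C ++ w ++ List.replicate (g - m) false := by
  unfold _root_.star
  rw [finalDescent_eq]
  have hlen : (C ++ true :: List.replicate g false).length = C.length + (g + 1) := by
    simp
  rw [hlen]
  have : C.length + (g + 1) - (g + 1) = C.length := by omega
  rw [this, List.take_left' rfl]

/-- Canonical decomposition of a nonempty Dyck word. -/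
lemma exists_decomp {m : ℕ} (hm : 1 ≤ m) {v : List Bool} (h : IsDyck m v) (hne : v ≠ []) :
    ∃ B s, v = B ++ true :: List.replicate (m + s) false ∧
      (∀ p, p <+: B → 0 ≤ Ht m p) ∧ Ht m B = s := by
  rw [isDyck_iff] at h
  obtain ⟨h0, hpre⟩ := h
  set r := v.reverse with hr
  have hrne : r ≠ [] := by simpa [hr] using hne
  set j := r.takeWhile (fun b => !b) with hj
  set r₂ := r.dropWhile (fun b => !b) with hr₂
  have hsplit : j ++ r₂ = r := List.takeWhile_append_dropWhile (p := fun b => !b) (l := r)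
  have hjrep : j = List.replicate j.length false := by
    refine List.eq_replicate_iff.2 ⟨rfl, fun b hb => ?_⟩
    have := List.mem_takeWhile_imp (hj ▸ hb)
    simpa using this
  have hr₂ne : r₂ ≠ [] := by
    intro hcon
    rw [hcon, List.append_nil] at hsplit
    have : v = List.replicate j.length false := by
      rw [← List.reverse_reverse v, ← hr, ← hsplit, hjrep]
      simp [List.reverse_replicate]
    rw [this] at h0
    simp at h0
    have : v.length = 0 := by rw [this, h0]; simp
    exact hne (List.length_eq_zero_iff.mp this)
  obtain ⟨b, r₃, hbr⟩ := List.exists_cons_of_ne_nil hr₂ne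
  have hhead := List.head_dropWhile_not (fun b => !b) (l := r) hr₂ne
  have hb : b = true := by
    simp only [hr₂] at hbr
    simp only [hbr, List.head_cons] at hhead
    simpa using hhead
  subst hb

  have hv : v = r₃.reverse ++ true :: List.replicate j.length false := by
    rw [← List.reverse_reverse v, ← hr, ← hsplit, hbr, hjrep]
    simp [List.reverse_append, List.reverse_replicate]
  set B := r₃.reverse with hB
  have hBpre : ∀ p, p <+: B → 0 ≤ Ht m p := by
    intro p hp
    exact hpre p (hp.trans ⟨true :: List.replicate j.length false, hv.symm⟩)
  have hHtB : Ht m v = Ht m B + m - j.length := by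
    rw [hv, ht_append]
    simp
    ring
  have hBnn : 0 ≤ Ht m B := hBpre B (List.prefix_refl B)
  have hlen : (j.length : ℤ) = m + Ht m B := by omega
  refine ⟨B, (Ht m B).toNat, ?_, hBpre, by omega⟩
  have : j.length = m + (Ht m B).toNat := by omega
  rw [hv, this]

lemma star_decomp (m : ℕ) (B : List Bool) (s : ℕ) (w : List Bool) :
    _root_.star m (B ++ true :: List.replicate (m + s) false) w
      = B ++ w ++ List.replicate s false := by
  rw [star_eq]
  congr 2
  omega

/-- The star of Dyck words is Dyck (in the decomposed form). -/
lemma dyck_of_parts {m : ℕ} {B v₂ : List Bool} {s : ℕ}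
    (hBpre : ∀ p, p <+: B → 0 ≤ Ht m p) (hBs : Ht m B = s) (h₂ : IsDyck m v₂) :
    IsDyck m (B ++ v₂ ++ List.replicate s false) := by
  rw [isDyck_iff] at h₂ ⊢
  obtain ⟨h20, h2pre⟩ := h₂
  constructor
  · rw [ht_append, ht_append, h20, hBs]; simp
  · intro p hp
    rw [List.append_assoc] at hp
    rcases prefix_append_cases hp with hpB | ⟨q, hq, rfl⟩
    · exact hBpre p hpB
    · rw [ht_append, hBs]
      rcases prefix_append_cases hq with hqv | ⟨r, hr, rfl⟩
      · have := h2pre q hqv; omega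
      · obtain ⟨j, hj, rfl⟩ := prefix_replicate hr
        rw [ht_append, h20, ht_replicate_false]
        omega

lemma prime_peak {m : ℕ} (hm : 1 ≤ m) :
    IsPrimePath m (true :: List.replicate m false) := by
  rw [isPrime_iff]
  refine ⟨by simp, by simp, fun p hp hpne hpnw => ?_⟩
  obtain ⟨b, q, rfl⟩ := List.exists_cons_of_ne_nil hpne
  obtain ⟨hb, hq⟩ : b = true ∧ q <+: List.replicate m false := by
    rw [List.cons_prefix_cons] at hp; exact hp
  subst hb
  obtain ⟨j, hj, rfl⟩ := prefix_replicate hq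
  have hjm : j ≠ m := by
    intro h; subst h; exact hpnw rfl
  simp only [ht_cons_true, ht_replicate_false]
  omega

/-- transfer₁ : if `k ++ v₂ ++ 0^{s₁}` is prime then so is `k ++ 1 0^{m+s₁}`. -/
lemma transfer₁ {m : ℕ} (hm : 1 ≤ m) {v₂ k : List Bool} {s₁ : ℕ}
    (h₂ : IsPrimePath m v₂)
    (hd : IsPrimePath m (k ++ v₂ ++ List.replicate s₁ false)) :
    IsPrimePath m (k ++ true :: List.replicate (m + s₁) false) := by
  rw [isPrime_iff] at hd h₂ ⊢
  obtain ⟨hd0, hdne, hdp⟩ := hd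
  obtain ⟨h20, h2ne, h2p⟩ := h₂
  have h2nil : v₂ ≠ [] := h2ne
  rcases eq_or_ne k [] with rfl | hkne
  · -- then s₁ = 0 and the goal is the peak
    have hs₁ : s₁ = 0 := by
      by_contra hs
      have hv₂pre : v₂ <+: [] ++ v₂ ++ List.replicate s₁ false := by
        simp
      have hv₂nw : v₂ ≠ [] ++ v₂ ++ List.replicate s₁ false := by
        intro hcon
        have := congrArg List.length hcon
        simp at this
        omega
      have := hdp v₂ hv₂pre h2nil hv₂nw
      omega
    subst hs₁
    have := prime_peak (m := m) hm
    rw [isPrime_iff] at this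
    simpa using this
  · -- k nonempty
    have hkpre : ∀ p, p <+: k → p ≠ [] → 0 < Ht m p := by
      intro p hp hpne
      have hppre : p <+: k ++ v₂ ++ List.replicate s₁ false := by
        rw [List.append_assoc]; exact hp.trans ⟨_, rfl⟩
      have hpnw : p ≠ k ++ v₂ ++ List.replicate s₁ false := by
        intro hcon
        have := congrArg List.length hcon
        have h2len : 0 < v₂.length := List.length_pos_iff.2 h2nil
        have := hp.length_le
        simp at *
        omega
      exact hdp p hppre hpne hpnw
    have hHtk : Ht m k = s₁ := by
      rw [ht_append, ht_append, h20, ht_replicate_false] at hd0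
      omega
    constructor
    · rw [ht_append]; simp; omega
    refine ⟨by simp, fun p hp hpne hpnw => ?_⟩
    rcases prefix_append_cases hp with hpk | ⟨q, hq, rfl⟩
    · rcases eq_or_ne p k with rfl | hpk'
      · have := hkpre p (List.prefix_refl _) hpne; omega
      · exact hkpre p hpk hpne
    · rcases eq_or_ne q [] with rfl | hqne
      · simp only [List.append_nil]
        have := hkpre k (List.prefix_refl _) hkne; omega
      obtain ⟨b, q', rfl⟩ := List.exists_cons_of_ne_nil hqne
      obtain ⟨hb, hq'⟩ : b = true ∧ q' <+: List.replicate (m + s₁) false := by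
        rw [List.cons_prefix_cons] at hq; exact hq
      subst hb
      obtain ⟨j, hj, rfl⟩ := prefix_replicate hq'
      have hjne : j ≠ m + s₁ := by
        intro h; subst h; exact hpnw rfl
      rw [ht_append]
      simp only [ht_cons_true, ht_replicate_false]
      omega

/-- transfer₂ : if `k ++ 1 0^{m+s₁}` is prime then so is `k ++ v₂ ++ 0^{s₁}`. -/
lemma transfer₂ {m : ℕ} (hm : 1 ≤ m) {v₂ k : List Bool} {s₁ : ℕ}
    (h₂ : IsPrimePath m v₂)
    (hd : IsPrimePath m (k ++ true :: List.replicate (m + s₁) false)) :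
    IsPrimePath m (k ++ v₂ ++ List.replicate s₁ false) := by
  rw [isPrime_iff] at hd h₂ ⊢
  obtain ⟨hd0, hdne, hdp⟩ := hd
  obtain ⟨h20, h2ne, h2p⟩ := h₂
  have h2pre : ∀ q, q <+: v₂ → 0 ≤ Ht m q := by
    intro q hq
    rcases eq_or_ne q [] with rfl | hqne
    · simp
    rcases eq_or_ne q v₂ with rfl | hqnw
    · omega
    · exact (h2p q hq hqne hqnw).le
  have hHtk : Ht m k = s₁ := by
    rw [ht_append] at hd0
    simp only [ht_cons_true, ht_replicate_false] at hd0
    omega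
  rcases eq_or_ne k [] with rfl | hkne
  · have hs₁ : s₁ = 0 := by simp at hHtk; omega
    subst hs₁
    simpa using ⟨h20, h2ne, h2p⟩
  · have hkpos : 0 < Ht m k := by
      refine hdp k ⟨_, rfl⟩ hkne ?_
      intro hcon
      have := congrArg List.length hcon
      simp at this
    have hkpre : ∀ p, p <+: k → p ≠ [] → 0 < Ht m p := by
      intro p hp hpne
      refine hdp p (hp.trans ⟨_, rfl⟩) hpne ?_
      intro hcon
      have hle := hp.length_le
      have := congrArg List.length hcon
      simp at this
      omega
    constructor
    · rw [ht_append, ht_append, h20, ht_replicate_false]; omega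
    refine ⟨by simp [h2ne], fun p hp hpne hpnw => ?_⟩
    rw [List.append_assoc] at hp
    rcases prefix_append_cases hp with hpk | ⟨q, hq, rfl⟩
    · exact hkpre p hpk hpne
    · rcases prefix_append_cases hq with hqv | ⟨r, hr, rfl⟩
      · rw [ht_append]
        have := h2pre q hqv
        omega
      · obtain ⟨j, hj, rfl⟩ := prefix_replicate hr
        have hjne : j ≠ s₁ := by
          intro h; subst h
          exact hpnw (by rw [List.append_assoc])
        rw [ht_append, ht_append, h20, ht_replicate_false]
        omega

lemma prefix_mono_right {α : Type*} {u : List α} {r t : List α} (h : r <+: t) :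
    u ++ r <+: u ++ t := by
  obtain ⟨x, rfl⟩ := h
  exact ⟨x, by simp⟩

lemma cover_dyck {m : ℕ} (hm : 1 ≤ m) {w w' : List Bool}
    (hc : OrdCover m w w') (h : IsDyck m w) : IsDyck m w' := by
  obtain ⟨u, d, t, hdP, rfl, rfl⟩ := (ordCover_iff hm).mp hc
  rw [List.append_assoc]
  rw [isDyck_iff] at h ⊢
  obtain ⟨h0, hpre⟩ := h
  have hd0 : Ht m d = 0 := (isPrime_iff.mp hdP).1
  have hdpre : ∀ q, q <+: d → 0 ≤ Ht m q := (isDyck_iff.mp hdP.1).2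
  constructor
  · rw [ht_append] at h0 ⊢
    simp only [ht_cons_false, ht_append] at h0 ⊢
    omega
  · intro p hp
    rcases prefix_append_cases hp with hpu | ⟨q, hq, rfl⟩
    · exact hpre p (hpu.trans ⟨_, rfl⟩)
    · rw [ht_append]
      have hu : 0 ≤ Ht m u := hpre u ⟨_, rfl⟩
      rcases prefix_append_cases hq with hqd | ⟨r, hr, rfl⟩
      · have := hdpre q hqd; omega
      · rcases r with _ | ⟨b, r'⟩
        · simp only [List.append_nil]
          omega
        · obtain ⟨hb, hr'⟩ := List.cons_prefix_cons.mp hr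
          subst hb
          have hwpre : u ++ false :: (d ++ r') <+: u ++ false :: (d ++ t) :=
            prefix_mono_right (List.cons_prefix_cons.mpr ⟨rfl, prefix_mono_right hr'⟩)
          have := hpre _ hwpre
          rw [ht_append] at this
          simp only [ht_cons_false, ht_append] at this ⊢
          omega

lemma cover_ne {m : ℕ} {w w' : List Bool} (hc : OrdCover m w w') : w' ≠ [] := by
  obtain ⟨u, d, t, hdne, -, -, rfl, -⟩ := hc
  simp [hdne]

lemma cover_prime {m : ℕ} (hm : 1 ≤ m) {w w' : List Bool}
    (hc : OrdCover m w w') (h : IsPrimePath m w) : IsPrimePath m w' := by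
  obtain ⟨u, d, t, hdP, hw, rfl⟩ := (ordCover_iff hm).mp hc
  rw [List.append_assoc]
  have hune : u ≠ [] := by
    intro hu
    obtain ⟨w'', hw''⟩ := prime_head hm h
    rw [hw'', hu] at hw
    simp only [List.nil_append] at hw
    exact Bool.noConfusion (List.head_eq_of_cons_eq hw)
  rw [isPrime_iff] at h ⊢
  obtain ⟨h0, hne, hp⟩ := h
  have hd0 : Ht m d = 0 := (isPrime_iff.mp hdP).1
  have hdne : d ≠ [] := hdP.2.1
  have hdpre : ∀ q, q <+: d → 0 ≤ Ht m q := (isDyck_iff.mp hdP.1).2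
  have hwpre : ∀ p, p <+: w → 0 ≤ Ht m p := by
    intro p hpw
    rcases eq_or_ne p [] with rfl | hpne
    · simp
    rcases eq_or_ne p w with rfl | hpnw
    · omega
    · exact (hp p hpw hpne hpnw).le
  subst hw
  have hupos : 0 < Ht m u := by
    refine hp u ⟨_, rfl⟩ hune ?_
    intro hcon
    have := congrArg List.length hcon
    simp at this
  constructor
  · rw [ht_append] at h0 ⊢
    simp only [ht_cons_false, ht_append] at h0 ⊢
    omega
  refine ⟨by simp [hune], fun p hpw hpne hpnw => ?_⟩
  rcases prefix_append_cases hpw with hpu | ⟨q, hq, rfl⟩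
  · rcases eq_or_ne p u with rfl | hpu'
    · exact hupos
    · refine hp p (hpu.trans ⟨_, rfl⟩) hpne ?_
      intro hcon
      subst hcon
      have h2 := hpu.length_le
      simp only [List.length_append, List.length_cons] at h2
      omega
  · rw [ht_append]
    rcases prefix_append_cases hq with hqd | ⟨r, hr, rfl⟩
    · have := hdpre q hqd; omega
    · rcases r with _ | ⟨b, r'⟩
      · simp only [List.append_nil]; omega
      · obtain ⟨hb, hr'⟩ := List.cons_prefix_cons.mp hr
        subst hb
        have hrt : r' ≠ t := by
          intro hcon
          apply hpnw
          rw [hcon]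
        have hwpre2 : u ++ false :: (d ++ r') <+: u ++ false :: (d ++ t) :=
          prefix_mono_right (List.cons_prefix_cons.mpr ⟨rfl, prefix_mono_right hr'⟩)
        have hproper : u ++ false :: (d ++ r') ≠ u ++ false :: (d ++ t) := by
          intro hcon
          apply hrt
          have := List.append_cancel_left hcon
          have := List.tail_eq_of_cons_eq this
          exact List.append_cancel_left this
        have := hp _ hwpre2 (by simp) hproper
        rw [ht_append] at this
        simp only [ht_cons_false, ht_append] at this ⊢
        omega

lemma key_ii_right {m : ℕ} (hm : 1 ≤ m) {v₁ v₂ w₂ : List Bool}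
    (h₁ : IsDyck m v₁) (h₁n : v₁ ≠ []) (hc : OrdCover m v₂ w₂) :
    OrdCover m (star m v₁ v₂) (star m v₁ w₂) := by
  obtain ⟨B, s, hv, hBpre, hBs⟩ := exists_decomp hm h₁ h₁n
  rw [hv, star_decomp, star_decomp]
  obtain ⟨u, d, t, hdP, rfl, rfl⟩ := (ordCover_iff hm).mp hc
  refine (ordCover_iff hm).mpr ⟨B ++ u, d, t ++ List.replicate s false, hdP, ?_, ?_⟩
  · simp [List.append_assoc]
  · simp [List.append_assoc]

lemma rep_merge (a b : ℕ) :
    List.replicate a false ++ false :: List.replicate b false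
      = List.replicate (a + b + 1) false := by
  rw [show a + b + 1 = a + (b+1) by omega, List.replicate_add]
  simp [List.replicate_succ]

lemma key_ii_left {m : ℕ} (hm : 1 ≤ m) {v₁ v₂ w₁ : List Bool}
    (h₁ : IsDyck m v₁) (h₁n : v₁ ≠ []) (h₂ : IsPrimePath m v₂)
    (hc : OrdCover m v₁ w₁) :
    OrdCover m (star m v₁ v₂) (star m w₁ v₂) := by
  obtain ⟨B, s, hv, hBpre, hBs⟩ := exists_decomp hm h₁ h₁n
  obtain ⟨u, d, t, hdP, hveq, rfl⟩ := (ordCover_iff hm).mp hc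
  obtain ⟨d', hd'⟩ := prime_head hm hdP
  have hd0 : Ht m d = 0 := (isPrime_iff.mp hdP).1
  have heq : u ++ false :: (d ++ t) = B ++ true :: List.replicate (m+s) false := by
    rw [← hveq, ← hv]
  rcases List.append_eq_append_iff.mp heq with ⟨k, hBk, hk⟩ | ⟨k, huk, hk⟩
  · -- the valley is inside B
    obtain ⟨b, k₂, rfl⟩ : ∃ b k₂, k = b :: k₂ := by
      cases k with
      | nil =>
        exfalso
        simp only [List.nil_append] at hk
        exact Bool.noConfusion (List.head_eq_of_cons_eq hk)
      | cons b k₂ => exact ⟨b, k₂, rfl⟩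
    obtain ⟨hb, hk₂⟩ : false = b ∧ d ++ t = k₂ ++ true :: List.replicate (m+s) false := by
      rw [List.cons_append] at hk
      exact ⟨List.head_eq_of_cons_eq hk, List.tail_eq_of_cons_eq hk⟩
    subst hb
    -- either d sits inside B, or d straddles the final peak
    have doA : ∀ j : List Bool, k₂ = d ++ j →
        t = j ++ true :: List.replicate (m+s) false →
        OrdCover m (star m v₁ v₂) (star m (u ++ d ++ false :: t) v₂) := by
      rintro j rfl rfl
      rw [hv, hBk, star_decomp]
      have hw₁ : u ++ d ++ false :: (j ++ true :: List.replicate (m+s) false)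
          = (u ++ d ++ false :: j) ++ true :: List.replicate (m+s) false := by
        simp [List.append_assoc]
      rw [hw₁, star_decomp]
      refine (ordCover_iff hm).mpr
        ⟨u, d, j ++ v₂ ++ List.replicate s false, hdP, ?_, ?_⟩
      · simp [List.append_assoc]
      · simp [List.append_assoc]
    rcases List.append_eq_append_iff.mp hk₂ with ⟨j, hk₂', ht⟩ | ⟨c, hd2, hct⟩
    · exact doA j hk₂' ht
    · rcases c with _ | ⟨b, c₂⟩
      · exact doA [] (by simpa using hd2.symm) (by simpa using hct.symm)
      · obtain ⟨hb, hc₂⟩ : b = true ∧ c₂ ++ t = List.replicate (m+s) false := by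
          rw [List.cons_append] at hct
          exact ⟨(List.head_eq_of_cons_eq hct).symm, (List.tail_eq_of_cons_eq hct).symm⟩
        subst hb
        obtain ⟨hc₂rep, htrep, hlen⟩ := append_eq_replicate hc₂
        set j := c₂.length with hjdef
        set t' := t.length with ht'def
        -- d = k₂ ++ true :: 0^j ;  Ht k₂ = j - m ≥ 0
        have hd3 : d = k₂ ++ true :: List.replicate j false := by
          rw [hd2, hc₂rep]
        have hk₂pre : 0 ≤ Ht m k₂ := (isDyck_iff.mp hdP.1).2 k₂ (by rw [hd3]; exact ⟨_, rfl⟩)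
        have hdht : Ht m k₂ + m - j = 0 := by
          rw [hd3, ht_append] at hd0
          simp only [ht_cons_true, ht_replicate_false] at hd0
          omega
        have hjm : m ≤ j := by omega
        set s₁ := j - m with hs₁def
        have hs₁s : s₁ ≤ s := by omega
        have hjs₁ : j = m + s₁ := by omega
        have hk₂ht : Ht m k₂ = s₁ := by
          rw [hs₁def]; push_cast; omega
        -- the transferred prime factor
        have hdvP : IsPrimePath m (k₂ ++ v₂ ++ List.replicate s₁ false) :=
          transfer₂ hm h₂ (by rw [← hjs₁, ← hd3]; exact hdP)
        -- rewrite w₁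
        have hw₁ : u ++ d ++ false :: t
            = (u ++ k₂) ++ true :: List.replicate (m + (s+1)) false := by
          rw [hd3, htrep]
          simp only [List.append_assoc, List.cons_append, List.append_nil]
          congr 3
          rw [rep_merge]
          congr 1
          omega
        rw [hv, hBk, hw₁, star_decomp, star_decomp]
        refine (ordCover_iff hm).mpr
          ⟨u, k₂ ++ v₂ ++ List.replicate s₁ false, List.replicate (s - s₁) false,
            hdvP, ?_, ?_⟩
        · have hrep : List.replicate s false
              = List.replicate s₁ false ++ List.replicate (s - s₁) false := by
            rw [← List.replicate_add]; congr 1; omega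
          rw [hrep]
          simp [List.append_assoc]
        · have hrep : List.replicate s₁ false ++ false :: List.replicate (s - s₁) false
              = List.replicate (s + 1) false := by
            rw [rep_merge]; congr 1; omega
          simp only [List.append_assoc, List.cons_append]
          rw [hrep]
  · -- the valley would be inside the final descent: impossible
    exfalso
    obtain ⟨b, k₂, rfl⟩ : ∃ b k₂, k = b :: k₂ := by
      cases k with
      | nil =>
        exfalso
        simp only [List.nil_append] at hk
        exact Bool.noConfusion (List.head_eq_of_cons_eq hk.symm)
      | cons b k₂ => exact ⟨b, k₂, rfl⟩
    have hk' : List.replicate (m+s) false = k₂ ++ false :: (d ++ t) := by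
      rw [List.cons_append] at hk
      exact List.tail_eq_of_cons_eq hk
    have : true ∈ List.replicate (m+s) false := by
      rw [hk', hd']
      simp
    exact Bool.noConfusion (List.eq_of_mem_replicate this)

lemma key_i {m : ℕ} (hm : 1 ≤ m) {v₁ v₂ w : List Bool}
    (h₁ : IsDyck m v₁) (h₁n : v₁ ≠ []) (h₂ : IsPrimePath m v₂)
    (hc : OrdCover m (star m v₁ v₂) w) :
    (∃ w₁, OrdCover m v₁ w₁ ∧ w = star m w₁ v₂) ∨
    (∃ w₂, OrdCover m v₂ w₂ ∧ w = star m v₁ w₂) := by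
  obtain ⟨B, s, hv, hBpre, hBs⟩ := exists_decomp hm h₁ h₁n
  have hstar : star m v₁ v₂ = B ++ v₂ ++ List.replicate s false := by
    rw [hv, star_decomp]
  obtain ⟨u, d, t, hdP, hveq, rfl⟩ := (ordCover_iff hm).mp hc
  obtain ⟨d', hd'⟩ := prime_head hm hdP
  obtain ⟨v₂', hv₂'⟩ := prime_head hm h₂
  have hd0 : Ht m d = 0 := (isPrime_iff.mp hdP).1
  have h20 : Ht m v₂ = 0 := (isPrime_iff.mp h₂).1
  have h2ne : v₂ ≠ [] := h₂.2.1
  have heq : u ++ false :: (d ++ t) = B ++ (v₂ ++ List.replicate s false) := by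
    rw [← hveq, hstar, List.append_assoc]
  rcases List.append_eq_append_iff.mp heq with ⟨k, hBk, hk⟩ | ⟨k, huk, hk⟩
  · -- valley inside B (or at its right end)
    obtain ⟨b, k', rfl⟩ : ∃ b k', k = b :: k' := by
      cases k with
      | nil =>
        exfalso
        simp only [List.nil_append, hv₂'] at hk
        exact Bool.noConfusion (List.head_eq_of_cons_eq hk)
      | cons b k' => exact ⟨b, k', rfl⟩
    obtain ⟨hb, hk'⟩ : false = b ∧ d ++ t = k' ++ (v₂ ++ List.replicate s false) := by
      rw [List.cons_append] at hk
      exact ⟨List.head_eq_of_cons_eq hk, List.tail_eq_of_cons_eq hk⟩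
    subst hb
    -- Case A : d inside B
    have doA : ∀ j : List Bool, k' = d ++ j →
        t = j ++ (v₂ ++ List.replicate s false) →
        (∃ w₁, OrdCover m v₁ w₁ ∧ u ++ d ++ false :: t = star m w₁ v₂) ∨
        (∃ w₂, OrdCover m v₂ w₂ ∧ u ++ d ++ false :: t = star m v₁ w₂) := by
      rintro j rfl rfl
      left
      refine ⟨u ++ d ++ false :: (j ++ true :: List.replicate (m+s) false), ?_, ?_⟩
      · refine (ordCover_iff hm).mpr
          ⟨u, d, j ++ true :: List.replicate (m+s) false, hdP, ?_, rfl⟩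
        rw [hv, hBk]
        simp [List.append_assoc]
      · have hw₁ : u ++ d ++ false :: (j ++ true :: List.replicate (m+s) false)
            = (u ++ d ++ false :: j) ++ true :: List.replicate (m+s) false := by
          simp [List.append_assoc]
        rw [hw₁, star_decomp]
        simp [List.append_assoc]
    -- Case B : d = k' ++ v₂ ++ 0^{s₁}
    have doB : ∀ s₁ s₂ : ℕ, s₁ + s₂ = s → d = k' ++ v₂ ++ List.replicate s₁ false →
        t = List.replicate s₂ false →
        (∃ w₁, OrdCover m v₁ w₁ ∧ u ++ d ++ false :: t = star m w₁ v₂) ∨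
        (∃ w₂, OrdCover m v₂ w₂ ∧ u ++ d ++ false :: t = star m v₁ w₂) := by
      rintro s₁ s₂ hs rfl rfl
      left
      have hd₁P : IsPrimePath m (k' ++ true :: List.replicate (m + s₁) false) :=
        transfer₁ hm h₂ hdP
      refine ⟨u ++ (k' ++ true :: List.replicate (m+s₁) false)
          ++ false :: List.replicate s₂ false, ?_, ?_⟩
      · refine (ordCover_iff hm).mpr
          ⟨u, k' ++ true :: List.replicate (m+s₁) false,
            List.replicate s₂ false, hd₁P, ?_, rfl⟩
        rw [hv, hBk]
        have hrep : List.replicate (m+s₁) false ++ List.replicate s₂ false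
            = List.replicate (m+s) false := by
          rw [← List.replicate_add]; congr 1; omega
        simp only [List.append_assoc, List.cons_append]
        rw [hrep]
      · have hw₁ : u ++ (k' ++ true :: List.replicate (m+s₁) false)
            ++ false :: List.replicate s₂ false
            = (u ++ k') ++ true :: List.replicate (m + (s+1)) false := by
          simp only [List.append_assoc, List.cons_append]
          congr 3
          rw [rep_merge]
          congr 1
          omega
        rw [hw₁, star_decomp]
        have hrep : List.replicate s₁ false ++ false :: List.replicate s₂ false
            = List.replicate (s+1) false := by
          rw [rep_merge]; congr 1; omega
        simp only [List.append_assoc, List.cons_append]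
        rw [hrep]
    rcases List.append_eq_append_iff.mp hk' with ⟨j, hk₂', ht⟩ | ⟨c, hd2, hct⟩
    · exact doA j hk₂' ht
    · rcases c with _ | ⟨b, c₂⟩
      · exact doA [] (by simpa using hd2.symm) (by simpa using hct.symm)
      · -- c = b :: c₂ nonempty ; split c against v₂
        rcases List.append_eq_append_iff.mp hct with ⟨r, hcr, hrt⟩ | ⟨e, hv₂e, hte⟩
        · -- c = v₂ ++ r, replicate s = r ++ t : case B
          obtain ⟨hrrep, htrep, hlen⟩ := append_eq_replicate hrt.symm
          refine doB r.length t.length (by omega) ?_ htrep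
          rw [hd2, hcr, ← hrrep, List.append_assoc]
        · -- v₂ = (b :: c₂) ++ e
          rcases e with _ | ⟨b', e'⟩
          · -- e = [] : v₂ = c, again case B with s₁ = 0
            refine doB 0 s (by omega) ?_ (by simpa using hte)
            simp only [List.replicate_zero, List.append_nil]
            rw [hd2, hv₂e]
            simp
          · -- e ≠ [] : impossible
            exfalso
            have hcne : (b :: c₂ : List Bool) ≠ [] := by simp
            have hcprefix : (b :: c₂ : List Bool) <+: v₂ := ⟨b' :: e', hv₂e.symm⟩
            have hcnv : (b :: c₂ : List Bool) ≠ v₂ := by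
              intro hcon
              rw [← hcon] at hv₂e
              have := congrArg List.length hv₂e
              simp at this
            have hcpos : 0 < Ht m (b :: c₂) :=
              (isPrime_iff.mp h₂).2.2 _ hcprefix hcne hcnv
            rcases eq_or_ne k' [] with rfl | hk'ne
            · rw [List.nil_append] at hd2
              rw [hd2] at hd0
              omega
            · have hk'pos : 0 < Ht m k' := by
                refine (isPrime_iff.mp hdP).2.2 k' (by rw [hd2]; exact ⟨_, rfl⟩) hk'ne ?_
                intro hcon
                rw [← hcon] at hd2
                have := congrArg List.length hd2
                simp at this
              rw [hd2, ht_append] at hd0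
              omega
  · -- valley to the right of B : inside v₂
    rcases List.append_eq_append_iff.mp hk with ⟨j, hkj, hjrep⟩ | ⟨c, hv₂c, hct⟩
    · -- replicate s = j ++ false :: (d ++ t) : d inside the final run, impossible
      exfalso
      have : true ∈ List.replicate s false := by
        rw [hjrep, hd']
        simp
      exact Bool.noConfusion (List.eq_of_mem_replicate this)
    · rcases c with _ | ⟨b, c₂⟩
      · exfalso
        simp only [List.nil_append] at hct
        have : true ∈ List.replicate s false := by
          rw [← hct, hd']
          simp
        exact Bool.noConfusion (List.eq_of_mem_replicate this)
      · obtain ⟨hb, hc₂⟩ : false = b ∧ d ++ t = c₂ ++ List.replicate s false := by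
          rw [List.cons_append] at hct
          exact ⟨List.head_eq_of_cons_eq hct, List.tail_eq_of_cons_eq hct⟩
        subst hb
        -- case C : d inside v₂
        have doC : ∀ j : List Bool, c₂ = d ++ j → t = j ++ List.replicate s false →
            (∃ w₁, OrdCover m v₁ w₁ ∧ u ++ d ++ false :: t = star m w₁ v₂) ∨
            (∃ w₂, OrdCover m v₂ w₂ ∧ u ++ d ++ false :: t = star m v₁ w₂) := by
          rintro j rfl rfl
          right
          refine ⟨k ++ d ++ false :: j, ?_, ?_⟩
          · exact (ordCover_iff hm).mpr ⟨k, d, j, hdP, by rw [hv₂c], rfl⟩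
          · rw [hv, star_decomp, huk]
            simp [List.append_assoc]
        rcases List.append_eq_append_iff.mp hc₂ with ⟨j, hc₂', ht⟩ | ⟨e, hd2, het⟩
        · exact doC j hc₂' ht
        · rcases e with _ | ⟨b', e'⟩
          · exact doC [] (by simpa using hd2.symm) (by simpa using het.symm)
          · -- d = c₂ ++ (b' :: e') with b' :: e' a run of 0's : impossible
            exfalso
            obtain ⟨herep, htrep, hlen⟩ := append_eq_replicate het.symm
            have hc₂ne : c₂ ≠ [] := by
              intro hc
              subst hc
              have hd2' : d = b' :: e' := by simpa using hd2
              rw [hd'] at hd2'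
              have hb' : true = b' := List.head_eq_of_cons_eq hd2'
              have : true ∈ List.replicate s false := by
                rw [het, ← hb']
                simp
              exact Bool.noConfusion (List.eq_of_mem_replicate this)
            -- Ht c₂ ≤ 0 from v₂ being Dyck
            have hkf : Ht m (k ++ [false]) ≥ 0 := by
              refine (isDyck_iff.mp h₂.1).2 (k ++ [false]) ?_
              rw [hv₂c]
              refine ⟨c₂, by simp⟩
            have hv₂ht : Ht m k + Ht m c₂ - 1 = 0 := by
              rw [hv₂c] at h20
              rw [ht_append] at h20
              simp only [ht_cons_false] at h20
              omega
            have hkht : 0 ≤ Ht m k - 1 := by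
              rw [ht_append] at hkf
              simp only [ht_cons_false, ht_nil] at hkf
              omega
            -- Ht c₂ > 0 from d being prime
            have hc₂pos : 0 < Ht m c₂ := by
              refine (isPrime_iff.mp hdP).2.2 c₂ (by rw [hd2]; exact ⟨_, rfl⟩) hc₂ne ?_
              intro hcon
              rw [← hcon] at hd2
              have := congrArg List.length hd2
              simp at this
            omega

lemma le_dyck {m : ℕ} (hm : 1 ≤ m) {v w : List Bool} (h : OrdLe m v w)
    (hd : IsDyck m v) (hn : v ≠ []) : IsDyck m w ∧ w ≠ [] := by
  induction h with
  | refl => exact ⟨hd, hn⟩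
  | tail hab hbc ih => exact ⟨cover_dyck hm hbc ih.1, cover_ne hbc⟩

lemma le_prime {m : ℕ} (hm : 1 ≤ m) {v w : List Bool} (h : OrdLe m v w)
    (hp : IsPrimePath m v) : IsPrimePath m w := by
  induction h with
  | refl => exact hp
  | tail hab hbc ih => exact cover_prime hm hbc ih

end StarProof

open StarProof in
/-- Compatibility of the product `*` with the ordinary `m`-Tamari
order when the second factor is prime: (i) every cover relation from `v₁ * v₂` acts on
one of the two factors; (ii) cover relations on the factors give cover relations on the
product; (iii) the upper ideal of `v₁ * v₂` is the set of products `w₁ * w₂` with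
`v₁ ≤ w₁` and `v₂ ≤ w₂`. -/
theorem ord_cover_star (m : ℕ) (hm : 1 ≤ m) (v₁ v₂ : List Bool)
    (h₁ : IsDyck m v₁) (h₁n : v₁ ≠ []) (h₂ : IsPrimePath m v₂) :
    -- (i)
    (∀ w : List Bool, OrdCover m (star m v₁ v₂) w →
        (∃ w₁, OrdCover m v₁ w₁ ∧ w = star m w₁ v₂) ∨
        (∃ w₂, OrdCover m v₂ w₂ ∧ w = star m v₁ w₂)) ∧
    -- (ii)
    (∀ w₁ : List Bool, OrdCover m v₁ w₁ →
        OrdCover m (star m v₁ v₂) (star m w₁ v₂)) ∧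
    (∀ w₂ : List Bool, OrdCover m v₂ w₂ →
        OrdCover m (star m v₁ v₂) (star m v₁ w₂)) ∧
    -- (iii)
    (∀ w : List Bool, OrdLe m (star m v₁ v₂) w ↔
        ∃ w₁ w₂ : List Bool, OrdLe m v₁ w₁ ∧ OrdLe m v₂ w₂ ∧ w = star m w₁ w₂) := by
  refine ⟨fun w hc => key_i hm h₁ h₁n h₂ hc,
    fun w₁ hc => key_ii_left hm h₁ h₁n h₂ hc,
    fun w₂ hc => key_ii_right hm h₁ h₁n hc,
    fun w => ⟨?_, ?_⟩⟩
  · intro hle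
    induction hle with
    | refl => exact ⟨v₁, v₂, Relation.ReflTransGen.refl, Relation.ReflTransGen.refl, rfl⟩
    | tail hab hbc ih =>
      obtain ⟨w₁, w₂, l₁, l₂, rfl⟩ := ih
      obtain ⟨hw₁d, hw₁n⟩ := le_dyck hm l₁ h₁ h₁n
      have hw₂p := le_prime hm l₂ h₂
      rcases key_i hm hw₁d hw₁n hw₂p hbc with ⟨w₁', hcov, rfl⟩ | ⟨w₂', hcov, rfl⟩
      · exact ⟨w₁', w₂, l₁.tail hcov, l₂, rfl⟩
      · exact ⟨w₁, w₂', l₁, l₂.tail hcov, rfl⟩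
  · rintro ⟨w₁, w₂, l₁, l₂, rfl⟩
    have step1 : OrdLe m (star m v₁ v₂) (star m w₁ v₂) := by
      clear l₂
      induction l₁ with
      | refl => exact Relation.ReflTransGen.refl
      | tail hab hbc ih =>
        obtain ⟨hbd, hbn⟩ := le_dyck hm hab h₁ h₁n
        exact ih.tail (key_ii_left hm hbd hbn h₂ hbc)
    have step2 : OrdLe m (star m w₁ v₂) (star m w₁ w₂) := by
      obtain ⟨hw₁d, hw₁n⟩ := le_dyck hm l₁ h₁ h₁n
      clear l₁ step1
      induction l₂ with
      | refl => exact Relation.ReflTransGen.refl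
      | tail hab hbc ih =>
        exact ih.tail (key_ii_right hm hw₁d hw₁n hbc)
    exact step1.trans step2
end

section
/- Fix an integer m ≥ 1, and work in the polynomial ring ℚ[u]. For all integers a and ℓ with 0 ≤ a ≤ m+1 and ℓ ≥ −1, the identity ∇_m(u^{m+1−a}·R^a_ℓ(u)) = −u^{m+2−a}·R^{a−1}_{ℓ+1}(u) holds, where by convention R^{−1}_{ℓ+1}(u) = 0 (i.e., for a = 0 the right-hand side is 0). -/
/-- The operator `∇_m H := u·(H − u^{m+1}·H(1))/(u − 1)` on `A[u]` (here the division
by `u − 1` is exact, computed as division by the monic polynomial `u − 1`). -/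
noncomputable def nabla {A : Type*} [CommRing A] (m : ℕ) (H : Polynomial A) :
    Polynomial A :=
  Polynomial.X *
    Polynomial.divByMonic (H - Polynomial.X ^ (m + 1) * Polynomial.C (H.eval 1))
      (Polynomial.X - 1)

/-- `binomial(e+ℓ, e)` for an integer `ℓ ≥ −1`, with the convention for `ℓ = −1`
(more generally `ℓ < 0`): it equals `1` if `e = 0` and `0` if `e ≥ 1`. -/
def binomQ (ℓ : ℤ) (e : ℕ) : ℚ :=
  if ℓ < 0 then (if e = 0 then 1 else 0) else ((e + ℓ.toNat).choose e : ℚ)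

/-- `R^a_ℓ(u) = Σ_{e=0}^{a} binomial(e+ℓ,e)·u^e`, with the conventions `R^a_{−1} = 1`
for `a ≥ 0` and `R^a_ℓ = 0` for `a < 0`. -/
noncomputable def Rpoly (a ℓ : ℤ) : Polynomial ℚ :=
  if a < 0 then 0
  else ∑ e ∈ Finset.range (a.toNat + 1), Polynomial.C (binomQ ℓ e) * Polynomial.X ^ e

open Polynomial

lemma binomQ_zero (ℓ : ℤ) : binomQ ℓ 0 = 1 := by
  unfold binomQ; split <;> simp

lemma pascal (ℓ : ℤ) (hℓ : -1 ≤ ℓ) (e : ℕ) :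
    binomQ (ℓ + 1) (e + 1) = binomQ ℓ (e + 1) + binomQ (ℓ + 1) e := by
  rcases eq_or_lt_of_le hℓ with h | h
  · subst h
    simp [binomQ, Nat.choose_self]
  · have h0 : 0 ≤ ℓ := by omega
    lift ℓ to ℕ using h0
    have ht : ((ℓ : ℤ) + 1).toNat = ℓ + 1 := by omega
    have hneg : ¬ ((ℓ : ℤ) + 1 < 0) := by omega
    have hneg2 : ¬ ((ℓ : ℤ) < 0) := by omega
    simp only [binomQ, ht, Int.toNat_natCast, if_neg hneg, if_neg hneg2]
    have key : (e + 1 + (ℓ + 1)).choose (e + 1) =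
        (e + 1 + ℓ).choose (e + 1) + (e + (ℓ + 1)).choose e := by
      have h1 : e + 1 + (ℓ + 1) = (e + 1 + ℓ) + 1 := by omega
      have h2 : e + (ℓ + 1) = e + 1 + ℓ := by omega
      rw [h1, h2, Nat.choose_succ_succ]
      simp only [Nat.succ_eq_add_one]
      omega
    rw [key]; push_cast; ring

lemma Rpoly_succ (μ : ℤ) (a : ℕ) :
    Rpoly (a : ℤ) μ = Rpoly ((a : ℤ) - 1) μ + Polynomial.C (binomQ μ a) * Polynomial.X ^ a := by
  cases a with
  | zero => simp [Rpoly]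
  | succ b =>
    have h1 : ((b : ℤ) + 1 - 1) = (b : ℤ) := by ring
    have : ¬ ((b : ℤ) + 1 < 0) := by omega
    have hb : ¬ ((b : ℤ) < 0) := by omega
    simp only [Rpoly, Nat.cast_succ, h1, if_neg this, if_neg hb, Int.toNat_natCast]
    rw [show ((b:ℤ)+1).toNat = b + 1 by omega, Finset.sum_range_succ]

lemma key_id (ℓ : ℤ) (hℓ : -1 ≤ ℓ) (a : ℕ) :
    Rpoly (a : ℤ) ℓ - Polynomial.X ^ a * Polynomial.C (binomQ (ℓ + 1) a) =
      (1 - Polynomial.X) * Rpoly ((a : ℤ) - 1) (ℓ + 1) := by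
  induction a with
  | zero => simp [Rpoly, binomQ_zero]
  | succ b ih =>
    rw [Rpoly_succ ℓ (b+1), pascal ℓ hℓ b,
      show (((b:ℕ)+1 : ℕ) : ℤ) - 1 = (b : ℤ) by push_cast; ring,
      Rpoly_succ (ℓ+1) b, map_add]
    linear_combination ih

lemma Rpoly_eval_one (ℓ : ℤ) (hℓ : -1 ≤ ℓ) (a : ℕ) :
    (Rpoly (a : ℤ) ℓ).eval 1 = binomQ (ℓ + 1) a := by
  have := congrArg (Polynomial.eval 1) (key_id ℓ hℓ a)
  simp at this
  linarith

/-- For `0 ≤ a ≤ m+1` and `ℓ ≥ −1`,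
`∇_m(u^{m+1−a}·R^a_ℓ(u)) = −u^{m+2−a}·R^{a−1}_{ℓ+1}(u)` in `ℚ[u]`. -/
theorem nabla_R_first (m : ℕ) (hm : 1 ≤ m) (a : ℕ) (ha : a ≤ m + 1)
    (ℓ : ℤ) (hℓ : -1 ≤ ℓ) :
    nabla m (Polynomial.X ^ (m + 1 - a) * Rpoly (a : ℤ) ℓ) =
      -(Polynomial.X ^ (m + 2 - a) * Rpoly ((a : ℤ) - 1) (ℓ + 1)) := by
  set R' : Polynomial ℚ := Rpoly ((a : ℤ) - 1) (ℓ + 1) with hR'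
  have heval : ((Polynomial.X ^ (m + 1 - a) * Rpoly (a : ℤ) ℓ)).eval 1
      = binomQ (ℓ + 1) a := by
    simp [Rpoly_eval_one ℓ hℓ a]
  have hpow : Polynomial.X ^ (m + 1) =
      (Polynomial.X : Polynomial ℚ) ^ (m + 1 - a) * Polynomial.X ^ a := by
    rw [← pow_add]
    congr 1
    omega
  have hfact : Polynomial.X ^ (m + 1 - a) * Rpoly (a : ℤ) ℓ -
      Polynomial.X ^ (m + 1) *
        Polynomial.C ((Polynomial.X ^ (m + 1 - a) * Rpoly (a : ℤ) ℓ).eval 1) =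
      (Polynomial.X - 1) * (-(Polynomial.X ^ (m + 1 - a) * R')) := by
    rw [heval, hpow]
    have := key_id ℓ hℓ a
    rw [← hR'] at this
    linear_combination (Polynomial.X : Polynomial ℚ) ^ (m + 1 - a) * this
  have hmonic : (Polynomial.X - 1 : Polynomial ℚ).Monic := by
    simpa using Polynomial.monic_X_sub_C (1 : ℚ)
  rw [nabla, hfact, Polynomial.mul_divByMonic_cancel_left _ hmonic]
  have hpow2 : (Polynomial.X : Polynomial ℚ) ^ (m + 2 - a) =
      Polynomial.X * Polynomial.X ^ (m + 1 - a) := by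
    rw [← pow_succ']
    congr 1
    omega
  rw [hpow2]
  ring
end

section
/- Fix an integer m ≥ 1 and work in the polynomial ring ℚ[z][u]. Define H_{m+1}(u) := u^{m+2}·(1 − z·Σ_{e=0}^{m} (m+1−e)·u^e), and, for 0 ≤ i ≤ m, define H_i(u) := u^{i+1}·( 1 + Σ_{k=1}^{i+1} (−z)^k·binomial(i+1, k)·Σ_{e=0}^{m−i} binomial(e+k−1, e)·u^e + Σ_{k=1}^{i} (−z)^k·binomial(m+k−i−1, k−1)·Σ_{e=0}^{i−k} binomial(e+k, e)·u^{m+1−k−e} ). Then for every 1 ≤ i ≤ m+1 one has H_i = u·H_{i−1} + z·∇_m H_{i−1}; equivalently, (u − 1)·(H_i − u·H_{i−1}) = z·u·(H_{i−1} − u^{m+1}·H_{i−1}(1)), where H_{i−1}(1) is the evaluation of H_{i−1} at u = 1. -/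
/-- The series `z`, viewed in `ℚ[z][u]` (constant polynomial in `u`). -/
noncomputable def zC : Polynomial (Polynomial ℚ) := Polynomial.C Polynomial.X

/-- The polynomials `H_i ∈ ℚ[z][u]`, `0 ≤ i ≤ m+1`:
`H_{m+1}(u) = u^{m+2}(1 − z Σ_{e=0}^{m}(m+1−e)u^e)` and, for `0 ≤ i ≤ m`,
`H_i(u) = u^{i+1}(1 + Σ_{k=1}^{i+1}(−z)^k binom(i+1,k) Σ_{e=0}^{m−i} binom(e+k−1,e) u^e
  + Σ_{k=1}^{i}(−z)^k binom(m+k−i−1,k−1) Σ_{e=0}^{i−k} binom(e+k,e) u^{m+1−k−e})`. -/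
noncomputable def Hpoly (m i : ℕ) : Polynomial (Polynomial ℚ) :=
  if i = m + 1 then
    Polynomial.X ^ (m + 2) *
      (1 - zC * ∑ e ∈ Finset.range (m + 1),
          ((m + 1 - e : ℕ) : Polynomial (Polynomial ℚ)) * Polynomial.X ^ e)
  else
    Polynomial.X ^ (i + 1) *
      (1 +
        (∑ k ∈ Finset.Icc 1 (i + 1), (-zC) ^ k *
            (((i + 1).choose k : ℕ) : Polynomial (Polynomial ℚ)) *
            ∑ e ∈ Finset.range (m - i + 1),
              (((e + k - 1).choose e : ℕ) : Polynomial (Polynomial ℚ)) * Polynomial.X ^ e) +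
        ∑ k ∈ Finset.Icc 1 i, (-zC) ^ k *
            (((m + k - i - 1).choose (k - 1) : ℕ) : Polynomial (Polynomial ℚ)) *
            ∑ e ∈ Finset.range (i - k + 1),
              (((e + k).choose e : ℕ) : Polynomial (Polynomial ℚ)) *
                Polynomial.X ^ (m + 1 - k - e))

/-!
Write `H_i = u^(i+1) * Σ_k (-z)^k g_k` with `b = m + 1 - i`. Each `g_k` is built from the
truncations `Σ_{e<b} C(e+k,k) u^e` of `(1 - u)^(-(k+1))` and their reversals, and multiplying such
a sum by `u - 1` lowers `k` by one at the cost of a boundary monomial. Hence comparing the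
coefficients of `(-z)^(k+1)` on both sides reduces the recursion to one identity in `ℕ[u]` per
`k`, which follows from Pascal's rule. The top polynomial `H_{m+1}` is the case `b = 0` of the
same formula.
-/
open Polynomial Finset

namespace Hpoly

section

variable {R : Type*} [CommRing R]

noncomputable def binomSum (k b : ℕ) : R[X] :=
  ∑ e ∈ range b, (((e + k).choose k : ℕ) : R[X]) * X ^ e

noncomputable def binomSumRev (k n : ℕ) : R[X] :=
  ∑ e ∈ range n, (((e + k).choose k : ℕ) : R[X]) * X ^ (n - 1 - e)

@[simp]
theorem binomSumRev_zero (k : ℕ) : (binomSumRev k 0 : R[X]) = 0 := sum_range_zero _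

theorem binomSum_succ (k b : ℕ) :
    (binomSum k (b + 1) : R[X]) = binomSum k b + ((b + k).choose k : R[X]) * X ^ b :=
  sum_range_succ _ _

theorem X_sub_one_mul_binomSum_zero (b : ℕ) : (X - 1) * (binomSum 0 b : R[X]) = X ^ b - 1 := by
  induction b with
  | zero => simp [binomSum]
  | succ b ih =>
    rw [binomSum_succ, mul_add, ih, add_zero, Nat.choose_zero_right, Nat.cast_one, one_mul]
    ring

theorem X_sub_one_mul_binomSum_succ (k b : ℕ) :
    (X - 1) * (binomSum (k + 1) b : R[X]) =
      ((b + k).choose (k + 1) : R[X]) * X ^ b - binomSum k b := by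
  induction b with
  | zero => simp [binomSum]
  | succ b ih =>
    rw [binomSum_succ, binomSum_succ, mul_add, ih, show b + 1 + k = b + k + 1 by ring,
      show b + (k + 1) = b + k + 1 by ring, Nat.choose_succ_succ' (b + k) k]
    push_cast
    ring

theorem eval_one_binomSum (k b : ℕ) :
    (binomSum k b : R[X]).eval 1 = ((b + k).choose (k + 1) : R) := by
  induction b with
  | zero => simp [binomSum]
  | succ b ih =>
    rw [binomSum_succ, eval_add, ih, show b + 1 + k = b + k + 1 by ring,
      Nat.choose_succ_succ' (b + k) k]
    simp [add_comm]

theorem binomSumRev_succ (k n : ℕ) :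
    (binomSumRev k (n + 1) : R[X]) = X * binomSumRev k n + ((n + k).choose k : R[X]) := by
  rw [binomSumRev, sum_range_succ, binomSumRev, mul_sum, Nat.add_sub_cancel, Nat.sub_self, pow_zero,
    mul_one]
  congr 1
  refine sum_congr rfl fun e he => ?_
  rw [mul_left_comm, ← pow_succ']
  congr 2
  have := mem_range.mp he
  omega

theorem X_sub_one_mul_binomSumRev_succ (k n : ℕ) :
    (X - 1) * (binomSumRev (k + 1) n : R[X]) =
      binomSumRev k (n + 1) - ((n + k + 1).choose (k + 1) : R[X]) := by
  induction n with
  | zero => simp [binomSumRev]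
  | succ n ih =>
    rw [binomSumRev_succ, binomSumRev_succ (n := n + 1), mul_add, mul_left_comm, ih,
      binomSumRev_succ, show n + (k + 1) = n + k + 1 by ring, show n + 1 + k = n + k + 1 by ring,
      Nat.choose_succ_succ' (n + k + 1) k]
    push_cast
    ring

theorem eval_one_binomSumRev (k n : ℕ) :
    (binomSumRev k n : R[X]).eval 1 = ((n + k).choose (k + 1) : R) := by
  induction n with
  | zero => simp [binomSumRev]
  | succ n ih =>
    rw [binomSumRev_succ, eval_add, eval_mul, ih, show n + 1 + k = n + k + 1 by ring,
      Nat.choose_succ_succ' (n + k) k]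
    simp [add_comm]

theorem binomSumRev_one (n : ℕ) :
    (binomSumRev 1 n : R[X]) = ∑ e ∈ range n, ((n - e : ℕ) : R[X]) * X ^ e := by
  rw [binomSumRev, ← sum_range_reflect]
  refine sum_congr rfl fun e he => ?_
  have := mem_range.mp he
  rw [show n - 1 - e + 1 = n - e by omega, Nat.choose_one_right,
    show n - 1 - (n - 1 - e) = e by omega]

/-- `b.multichoose k = C(b + k - 1, k)` is the paper's `binomial(m+k-i-1, k-1)` after the shift
`k ↦ k + 1`, including its convention at `b = 0`, which is the case `i = m + 1`; the truncated
`i - k` makes the second summand vanish for `k ≥ i`. -/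
noncomputable def bracketCoeff (b i : ℕ) : ℕ → R[X]
  | 0 => 1
  | k + 1 => ((i + 1).choose (k + 1) : R[X]) * binomSum k b +
      (b.multichoose k : R[X]) * X ^ b * binomSumRev (k + 1) (i - k)

theorem bracketCoeff_step_zero (b j : ℕ) :
    (X - 1) * (bracketCoeff b (j + 1) 1 - bracketCoeff (b + 1) j 1 : R[X]) = X ^ b - 1 := by
  simp only [bracketCoeff, Nat.multichoose_zero_right, Nat.sub_zero]
  rw [binomSum_succ, binomSumRev_succ]
  simp only [zero_add, Nat.choose_one_right, Nat.choose_zero_right, add_zero]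
  push_cast
  linear_combination X_sub_one_mul_binomSum_zero (R := R) b

theorem bracketCoeff_step_last (b k : ℕ) :
    (X - 1) * (bracketCoeff b (k + 1) (k + 2) - bracketCoeff (b + 1) k (k + 2) : R[X]) =
      X ^ b * C ((bracketCoeff (b + 1) k (k + 1) : R[X]).eval 1) -
        bracketCoeff (b + 1) k (k + 1) := by
  simp only [bracketCoeff, Nat.choose_self, Nat.choose_succ_self, show k - (k + 1) = 0 by omega,
    Nat.sub_self, binomSumRev_zero, Nat.cast_one, Nat.cast_zero, one_mul, zero_mul, mul_zero,
    add_zero, eval_one_binomSum, map_natCast]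
  rw [binomSum_succ, show b + 1 + k = b + k + 1 by ring, Nat.choose_succ_succ' (b + k) k]
  push_cast
  linear_combination X_sub_one_mul_binomSum_succ (R := R) k b

theorem bracketCoeff_step_succ (b k n : ℕ) :
    (X - 1) *
        (bracketCoeff b (k + n + 2) (k + 2) - bracketCoeff (b + 1) (k + n + 1) (k + 2) : R[X]) =
      X ^ b * C ((bracketCoeff (b + 1) (k + n + 1) (k + 1) : R[X]).eval 1) -
        bracketCoeff (b + 1) (k + n + 1) (k + 1) := by
  simp only [bracketCoeff, show k + n + 2 - (k + 1) = n + 1 by omega,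
    show k + n + 1 - (k + 1) = n by omega,
    show k + n + 1 - k = n + 1 by omega, Nat.multichoose_eq, show b + (k + 1) - 1 = b + k by omega,
    show b + 1 + (k + 1) - 1 = b + k + 1 by omega, show b + 1 + k - 1 = b + k by omega]
  rw [eval_add, eval_mul, eval_mul, eval_mul, eval_one_binomSum, eval_one_binomSumRev]
  simp only [eval_natCast, eval_pow, eval_X, one_pow, mul_one]
  rw [binomSum_succ, binomSum_succ, binomSumRev_succ, binomSumRev_succ]
  simp only [map_add, map_mul, map_natCast, show k + n + 1 + 1 = k + n + 2 by ring,
    show n + (k + 1 + 1) = k + n + 2 by ring, show n + 1 + (k + 1) = k + n + 2 by ring,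
    show n + (k + 1) = n + k + 1 by ring, show b + (k + 1) = b + k + 1 by ring,
    show b + 1 + k = b + k + 1 by ring, Nat.choose_succ_succ' (k + n + 2) (k + 1),
    Nat.choose_succ_succ' (b + k) k]
  have hQ := X_sub_one_mul_binomSumRev_succ (R := R) (k + 1) n
  rw [binomSumRev_succ, show n + (k + 1) + 1 = k + n + 2 by ring,
    show n + (k + 1) = n + k + 1 by ring] at hQ
  push_cast
  linear_combination ((k + n + 2).choose (k + 1) : R[X]) *
      X_sub_one_mul_binomSum_succ (R := R) k b -
    X * X ^ b * ((b + k).choose k : R[X]) * hQ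

theorem bracketCoeff_step (b j k : ℕ) (hk : k ≤ j + 1) :
    (X - 1) * (bracketCoeff b (j + 1) (k + 1) - bracketCoeff (b + 1) j (k + 1) : R[X]) =
      X ^ b * C ((bracketCoeff (b + 1) j k : R[X]).eval 1) - bracketCoeff (b + 1) j k := by
  cases k with
  | zero => simpa [bracketCoeff] using bracketCoeff_step_zero (R := R) b j
  | succ k =>
    obtain ⟨n, rfl⟩ : ∃ n, j = k + n := ⟨j - k, by omega⟩
    cases n with
    | zero => exact bracketCoeff_step_last b k
    | succ n => exact bracketCoeff_step_succ b k n

noncomputable def bracket (c : R) (b i : ℕ) : R[X] :=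
  ∑ k ∈ range (i + 2), C c ^ k * bracketCoeff b i k

theorem bracket_recursion (c : R) (b j : ℕ) :
    (X - 1) * (bracket c b (j + 1) - bracket c (b + 1) j) =
      C c * (X ^ b * C ((bracket c (b + 1) j).eval 1) - bracket c (b + 1) j) := by
  have hlast : (bracketCoeff (b + 1) j (j + 2) : R[X]) = 0 := by
    simp [bracketCoeff]
  have hprev :
      bracket c (b + 1) j = ∑ k ∈ range (j + 3), C c ^ k * bracketCoeff (b + 1) j k := by
    rw [bracket, sum_range_succ _ (j + 2), hlast, mul_zero, add_zero]
  have heval : C ((bracket c (b + 1) j).eval 1) =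
      ∑ k ∈ range (j + 2), C c ^ k * C ((bracketCoeff (b + 1) j k : R[X]).eval 1) := by
    simp [bracket, eval_finsetSum]
  calc (X - 1) * (bracket c b (j + 1) - bracket c (b + 1) j)
      = ∑ k ∈ range (j + 3), C c ^ k *
          ((X - 1) * (bracketCoeff b (j + 1) k - bracketCoeff (b + 1) j k)) := by
        rw [bracket, hprev, ← sum_sub_distrib, mul_sum]
        exact sum_congr rfl fun _ _ => by ring
    _ = ∑ k ∈ range (j + 2), C c ^ (k + 1) *
          ((X - 1) * (bracketCoeff b (j + 1) (k + 1) - bracketCoeff (b + 1) j (k + 1))) := by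
        simp [sum_range_succ' _ (j + 2), bracketCoeff]
    _ = ∑ k ∈ range (j + 2), C c ^ (k + 1) *
          (X ^ b * C ((bracketCoeff (b + 1) j k : R[X]).eval 1) - bracketCoeff (b + 1) j k) :=
        sum_congr rfl fun k hk => by
          rw [bracketCoeff_step b j k (Nat.lt_succ_iff.mp (mem_range.mp hk))]
    _ = C c * (X ^ b * C ((bracket c (b + 1) j).eval 1) - bracket c (b + 1) j) := by
        rw [heval, bracket, mul_sum, ← sum_sub_distrib, mul_sum]
        exact sum_congr rfl fun _ _ => by ring

theorem bracket_zero_left (c : R) (i : ℕ) : bracket c 0 i = 1 + C c * binomSumRev 1 i := by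
  rw [bracket, sum_range_succ', sum_eq_single 0]
  · simp [bracketCoeff, binomSum, add_comm]
  · intro k _ hk
    obtain ⟨k, rfl⟩ := Nat.exists_eq_succ_of_ne_zero hk
    simp [bracketCoeff, binomSum]
  · simp

theorem bracket_eq (c : R) (b i : ℕ) :
    bracket c b i = 1 +
      ∑ k ∈ range (i + 1), C c ^ (k + 1) * (((i + 1).choose (k + 1) : R[X]) * binomSum k b) +
      ∑ k ∈ range i, C c ^ (k + 1) *
        ((b.multichoose k : R[X]) * X ^ b * binomSumRev (k + 1) (i - k)) := by
  rw [bracket, sum_range_succ', sum_range_succ _ i, sum_range_succ _ i]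
  simp only [bracketCoeff, mul_add, sum_add_distrib, Nat.sub_self, binomSumRev_zero, pow_zero,
    mul_one, mul_zero, add_zero]
  ring

end

theorem eq_X_pow_mul_bracket (m i : ℕ) (hi : i ≤ m + 1) :
    Hpoly m i = X ^ (i + 1) * bracket (-X) (m + 1 - i) i := by
  rcases hi.eq_or_lt with rfl | hlt
  · rw [Hpoly, if_pos rfl, Nat.sub_self, bracket_zero_left, binomSumRev_one, zC, map_neg]
    ring
  · have hIcc (n : ℕ) : Icc (1 : ℕ) n = Ico 1 (n + 1) :=
      (Ico_add_one_right_eq_Icc (1 : ℕ) n).symm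
    rw [Hpoly, if_neg hlt.ne, bracket_eq, hIcc, hIcc, sum_Ico_eq_sum_range, sum_Ico_eq_sum_range,
      Nat.add_sub_cancel, Nat.add_sub_cancel, zC, map_neg]
    refine congrArg (X ^ (i + 1) * ·) (congrArg₂ (· + ·) (congrArg (1 + ·) ?_) ?_)
    · refine sum_congr rfl fun k _ => ?_
      rw [add_comm 1 k, show m - i + 1 = m + 1 - i by omega, mul_assoc]
      refine congrArg _ (congrArg _ (sum_congr rfl fun e _ => ?_))
      rw [show e + (k + 1) - 1 = e + k by omega, Nat.choose_symm_add]
    · refine sum_congr rfl fun k hk => ?_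
      have := mem_range.mp hk
      rw [add_comm 1 k, Nat.multichoose_eq, show m + (k + 1) - i - 1 = m + 1 - i + k - 1 by omega,
        Nat.add_sub_cancel, binomSumRev, show i - (k + 1) + 1 = i - k by omega]
      simp only [mul_sum]
      refine sum_congr rfl fun e he => ?_
      have := mem_range.mp he
      rw [Nat.choose_symm_add,
        show m + 1 - (k + 1) - e = m + 1 - i + (i - k - 1 - e) by omega, pow_add]
      ring

end Hpoly

theorem Hpoly_recursion_general (m : ℕ) (i : ℕ) (hi1 : 1 ≤ i) (hi2 : i ≤ m + 1) :
    (Polynomial.X - 1) * (Hpoly m i - Polynomial.X * Hpoly m (i - 1)) =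
      zC * Polynomial.X *
        (Hpoly m (i - 1) -
          Polynomial.X ^ (m + 1) * Polynomial.C ((Hpoly m (i - 1)).eval 1)) := by
  obtain ⟨j, rfl⟩ : ∃ j, i = j + 1 := ⟨i - 1, by omega⟩
  obtain ⟨b, rfl⟩ : ∃ b, m = b + j := ⟨m - j, by omega⟩
  have hcur := Hpoly.eq_X_pow_mul_bracket (b + j) (j + 1) hi2
  have hprev := Hpoly.eq_X_pow_mul_bracket (b + j) j (by omega)
  rw [show b + j + 1 - (j + 1) = b by omega] at hcur
  rw [show b + j + 1 - j = b + 1 by omega] at hprev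
  rw [Nat.add_sub_cancel, hcur, hprev, eval_mul, eval_pow, eval_X, one_pow, one_mul]
  have hrec := Hpoly.bracket_recursion (-X : ℚ[X]) b j
  rw [map_neg, ← zC] at hrec
  linear_combination X ^ (j + 2) * hrec

/-- For `1 ≤ i ≤ m+1`, `H_i = u·H_{i−1} + z·∇_m H_{i−1}`, stated in
the equivalent cleared form
`(u − 1)(H_i − u·H_{i−1}) = z·u·(H_{i−1} − u^{m+1}·H_{i−1}(1))` in `ℚ[z][u]`. -/
theorem Hpoly_recursion (m : ℕ) (hm : 1 ≤ m) (i : ℕ) (hi1 : 1 ≤ i) (hi2 : i ≤ m + 1) :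
    (Polynomial.X - 1) * (Hpoly m i - Polynomial.X * Hpoly m (i - 1)) =
      zC * Polynomial.X *
        (Hpoly m (i - 1) -
          Polynomial.X ^ (m + 1) * Polynomial.C ((Hpoly m (i - 1)).eval 1)) :=
  Hpoly_recursion_general m i hi1 hi2
end
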